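/- arXiv:2406.18527 — 9 statements merged into one kernel-verified Lean document; each statement's English description precedes it below -/
import Mathlib

section
/- Let (X,d) be a quasi-metric space with quasi-subadditivity constant C_d (i.e., d(x,y) ≤ C_d · max{d(x,z), d(z,y)} for all x,y,z ∈ X). Then for every x ∈ X and r > 0, there exists a set E(x,r) ⊆ X that is open in the topology induced by d and satisfies B_d(x,r) ⊆ E(x,r) ⊆ B_d(x, C_d·r). -/
open Set MeasureTheory Topology
open scoped ENNReal NNReal

variable {X : Type*}

/-- The ball with respect to a quasi-metric `d`. -/
def qball (d : X → X → ℝ) (x : X) (r : ℝ) : Set X := {y | d x y < r}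

/-- The topology induced by a quasi-metric: a set is open iff every one of its
points admits a ball contained in the set. -/
def quasiMetricTopology (d : X → X → ℝ) : TopologicalSpace X where
  IsOpen O := ∀ x ∈ O, ∃ r > 0, qball d x r ⊆ O
  isOpen_univ := fun _ _ => ⟨1, one_pos, fun _ _ => trivial⟩
  isOpen_inter := by
    intro O₁ O₂ h₁ h₂ x hx
    obtain ⟨r₁, hr₁, hs₁⟩ := h₁ x hx.1
    obtain ⟨r₂, hr₂, hs₂⟩ := h₂ x hx.2
    refine ⟨min r₁ r₂, lt_min hr₁ hr₂, fun y hy => ⟨hs₁ ?_, hs₂ ?_⟩⟩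
    · exact lt_of_lt_of_le (show d x y < min r₁ r₂ from hy) (min_le_left _ _)
    · exact lt_of_lt_of_le (show d x y < min r₁ r₂ from hy) (min_le_right _ _)
  isOpen_sUnion := by
    intro S hS x hx
    obtain ⟨O, hO, hxO⟩ := hx
    obtain ⟨r, hr, hsub⟩ := hS O hO x hxO
    exact ⟨r, hr, fun y hy => ⟨O, hO, hsub hy⟩⟩

/-!
Balls need not be open, so take for `E` the set of points reached from `x` by chains whose
successive steps are shorter than `C r / C, C r / C², C r / C³, …`. A point reached after `n`
steps has a whole ball of radius `C r / Cⁿ⁺¹` one step further, so `E` is open; the first step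
alone sweeps out `B(x, r)`; and since the step lengths shrink by the factor `C`, the
quasi-triangle inequality, applied from the end of the chain backwards, keeps every point of `E`
within `C r` of `x`.
-/

/-- The points reached from `y` in `n` steps of lengths `< ρ / C, ρ / C², …, ρ / Cⁿ`. -/
def chainBall (d : X → X → ℝ) (C : ℝ) : ℕ → X → ℝ → Set X
  | 0, y, _ => {y}
  | n + 1, y, ρ => ⋃ w ∈ qball d y (ρ / C), chainBall d C n w (ρ / C)

section chainBall

variable {d : X → X → ℝ} {C : ℝ}

theorem mem_chainBall_succ {n : ℕ} {y z : X} {ρ : ℝ} :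
    z ∈ chainBall d C (n + 1) y ρ ↔ ∃ w ∈ qball d y (ρ / C), z ∈ chainBall d C n w (ρ / C) := by
  simp only [chainBall, mem_iUnion, exists_prop]

theorem qball_subset_chainBall_succ {n : ℕ} {y z : X} {ρ : ℝ} (hz : z ∈ chainBall d C n y ρ) :
    qball d z (ρ / C ^ (n + 1)) ⊆ chainBall d C (n + 1) y ρ := by
  induction n generalizing y ρ with
  | zero =>
    rw [mem_singleton_iff.mp hz]
    intro w hw
    exact mem_chainBall_succ.mpr ⟨w, by simpa using hw, rfl⟩
  | succ n ih =>
    obtain ⟨w, hyw, hwz⟩ := mem_chainBall_succ.mp hz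
    intro v hv
    refine mem_chainBall_succ.mpr ⟨w, hyw, ih hwz ?_⟩
    rwa [div_div, ← pow_succ']

theorem chainBall_subset_qball (hC : 0 < C) (htri : ∀ x y z, d x y ≤ C * max (d x z) (d z y))
    (hdiag : ∀ y, d y y = 0) {n : ℕ} {y : X} {ρ : ℝ} (hρ : 0 < ρ) :
    chainBall d C n y ρ ⊆ qball d y ρ := by
  induction n generalizing y ρ with
  | zero =>
    intro z hz
    rw [mem_singleton_iff.mp hz]
    simpa [qball, hdiag] using hρ
  | succ n ih =>
    intro z hz
    obtain ⟨w, hyw, hwz⟩ := mem_chainBall_succ.mp hz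
    have hwz : d w z < ρ / C := ih (div_pos hρ hC) hwz
    calc d y z ≤ C * max (d y w) (d w z) := htri y z w
      _ < C * (ρ / C) := mul_lt_mul_of_pos_left (max_lt hyw hwz) hC
      _ = ρ := mul_div_cancel₀ ρ hC.ne'

theorem isOpen_iUnion_chainBall (hC : 0 < C) {y : X} {ρ : ℝ} (hρ : 0 < ρ) :
    IsOpen[quasiMetricTopology d] (⋃ n, chainBall d C n y ρ) := by
  intro z hz
  obtain ⟨n, hzn⟩ := mem_iUnion.mp hz
  exact ⟨ρ / C ^ (n + 1), by positivity,
    (qball_subset_chainBall_succ hzn).trans (subset_iUnion (chainBall d C · y ρ) (n + 1))⟩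

end chainBall

theorem exists_open_between_balls_general (d : X → X → ℝ)
    (heq : ∀ x y, d x y = 0 ↔ x = y)
    (Cd : ℝ) (hCd : 1 ≤ Cd) (htri : ∀ x y z, d x y ≤ Cd * max (d x z) (d z y))
    (x : X) (r : ℝ) (hr : 0 < r) :
    ∃ E : Set X, IsOpen[quasiMetricTopology d] E ∧
      qball d x r ⊆ E ∧ E ⊆ qball d x (Cd * r) := by
  have hCd₀ : 0 < Cd := one_pos.trans_le hCd
  have hρ : 0 < Cd * r := mul_pos hCd₀ hr
  refine ⟨⋃ n, chainBall d Cd n x (Cd * r), isOpen_iUnion_chainBall hCd₀ hρ, ?_, ?_⟩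
  · have hstep := qball_subset_chainBall_succ (show x ∈ chainBall d Cd 0 x (Cd * r) from rfl)
    rw [zero_add, pow_one, mul_div_cancel_left₀ r hCd₀.ne'] at hstep
    exact hstep.trans (subset_iUnion (chainBall d Cd · x (Cd * r)) 1)
  · exact iUnion_subset fun n =>
      chainBall_subset_qball hCd₀ htri (fun y => (heq y y).mpr rfl) hρ

/-- for every center `x` and radius `r > 0` there is a set
`E` open in the topology induced by the quasi-metric `d` with
`B_d(x,r) ⊆ E ⊆ B_d(x, C_d·r)`. -/
theorem exists_open_between_balls (d : X → X → ℝ)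
    (hnn : ∀ x y, 0 ≤ d x y)
    (heq : ∀ x y, d x y = 0 ↔ x = y)
    (Csym : ℝ) (hCsym : 1 ≤ Csym) (hsym : ∀ x y, d y x ≤ Csym * d x y)
    (Cd : ℝ) (hCd : 1 ≤ Cd) (htri : ∀ x y z, d x y ≤ Cd * max (d x z) (d z y))
    (x : X) (r : ℝ) (hr : 0 < r) :
    ∃ E : Set X, IsOpen[quasiMetricTopology d] E ∧
      qball d x r ⊆ E ∧ E ⊆ qball d x (Cd * r) :=
  exists_open_between_balls_general d heq Cd hCd htri x r hr
end

section
/- Let (X,d,μ) be a separable quasi-metric space equipped with a nonnegative Borel measure μ with μ(X) < ∞. Then for any ε > 0 there exists a closed and totally bounded set G_ε ⊆ X such that μ(X \ G_ε) < ε. -/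
open Set MeasureTheory Topology
open scoped ENNReal NNReal

variable {X : Type*}

/-- A set is totally bounded w.r.t. the quasi-metric `d` if for every `r > 0`
it can be covered by finitely many `d`-balls of radius `r`. -/
def QTotallyBounded (d : X → X → ℝ) (S : Set X) : Prop :=
  ∀ r : ℝ, 0 < r → ∃ T : Set X, T.Finite ∧ S ⊆ ⋃ y ∈ T, qball d y r

/-!
Balls of a quasi-metric need not be open, but by the quasi-triangle inequality the points
admitting a ball inside a set `S` form an open set, so `qball d u s` is a neighbourhood of every
`x` with `d u x < s / Cd`. Hence, for a countable dense set `D`, the interiors of the balls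
of radius `s` about `D` cover `X`, and by continuity of the finite measure `μ` finitely many of
them leave out a set of measure `< δ k`. Intersecting these finite unions over the radii
`1 / (k + 1)` gives a totally bounded set `F` with `μ Fᶜ ≤ ∑ δ k < ε`; its closure is still
totally bounded, since the closure of `qball d x s` lies in `qball d x r` once `Cd * Csym * s < r`.
-/

theorem MeasureTheory.exists_finset_measure_compl_iUnion_lt {α ι : Type*} [MeasurableSpace α]
    [Countable ι] {μ : Measure α} [IsFiniteMeasure μ] {s : ι → Set α}
    (hs : ∀ i, MeasurableSet (s i)) (hcov : ⋃ i, s i = univ) {δ : ℝ≥0∞} (hδ : 0 < δ) :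
    ∃ t : Finset ι, μ (⋃ i ∈ t, s i)ᶜ < δ := by
  have hanti : Antitone fun t : Finset ι => (⋃ i ∈ t, s i)ᶜ := fun t t' htt' =>
    compl_subset_compl.2 (biUnion_subset_biUnion_left htt')
  have hempty : ⋂ t : Finset ι, (⋃ i ∈ t, s i)ᶜ = ∅ := by
    rw [← compl_iUnion, compl_empty_iff, iUnion_eq_univ_iff]
    intro x
    obtain ⟨i, hi⟩ := iUnion_eq_univ_iff.1 hcov x
    exact ⟨{i}, by simpa using hi⟩
  have hlim := tendsto_measure_iInter_atTop (μ := μ)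
    (fun t => (Finset.measurableSet_biUnion t fun i _ => hs i).compl.nullMeasurableSet) hanti
    ⟨∅, measure_ne_top μ _⟩
  rw [hempty, measure_empty] at hlim
  exact (hlim.eventually (gt_mem_nhds hδ)).exists

section QuasiMetric

variable {d : X → X → ℝ} {Cd Csym : ℝ}

theorem mem_interior_of_qball_subset (hself : ∀ x, d x x = 0) (hCd : 0 < Cd)
    (htri : ∀ x y z, d x y ≤ Cd * max (d x z) (d z y)) {S : Set X} {x : X} {ρ : ℝ}
    (hρ : 0 < ρ) (hS : qball d x ρ ⊆ S) : x ∈ @interior X (quasiMetricTopology d) S := by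
  let _ := quasiMetricTopology d
  set U := {y | ∃ ρ > 0, qball d y ρ ⊆ S}
  have hUopen : IsOpen U := by
    rintro y ⟨ρ, hρ, hy⟩
    refine ⟨ρ / Cd, by positivity, fun w hw => ⟨ρ / Cd, by positivity, fun z hz => hy ?_⟩⟩
    calc d y z ≤ Cd * max (d y w) (d w z) := htri y z w
      _ < Cd * (ρ / Cd) := mul_lt_mul_of_pos_left (max_lt hw hz) hCd
      _ = ρ := mul_div_cancel₀ ρ hCd.ne'
  have hUS : U ⊆ S := fun y ⟨ρ, hρ, hy⟩ => hy (show d y y < ρ by rw [hself]; exact hρ)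
  exact interior_maximal hUS hUopen ⟨ρ, hρ, hS⟩

theorem exists_mem_qball_of_mem_closure (hself : ∀ x, d x x = 0) (hCd : 0 < Cd)
    (htri : ∀ x y z, d x y ≤ Cd * max (d x z) (d z y)) {S : Set X} {x : X}
    (hx : x ∈ closure[quasiMetricTopology d] S) {ρ : ℝ} (hρ : 0 < ρ) :
    ∃ y ∈ S, d x y < ρ := by
  let _ := quasiMetricTopology d
  obtain ⟨y, hyx, hyS⟩ := mem_closure_iff.1 hx _ isOpen_interior
    (mem_interior_of_qball_subset hself hCd htri hρ subset_rfl)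
  exact ⟨y, hyS, (interior_subset hyx : y ∈ qball d x ρ)⟩

theorem closure_qball_subset (hself : ∀ x, d x x = 0) (hCsym : 1 ≤ Csym)
    (hsym : ∀ x y, d y x ≤ Csym * d x y) (hCd : 0 < Cd)
    (htri : ∀ x y z, d x y ≤ Cd * max (d x z) (d z y)) (x : X) {s r : ℝ} (hs : 0 < s)
    (hsr : Cd * (Csym * s) < r) : closure[quasiMetricTopology d] (qball d x s) ⊆ qball d x r := by
  intro y hy
  obtain ⟨z, hxz, hyz⟩ := exists_mem_qball_of_mem_closure hself hCd htri hy hs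
  have hxz' : d x z ≤ Csym * s := (le_of_lt hxz).trans (le_mul_of_one_le_left hs.le hCsym)
  have hzy : d z y ≤ Csym * s :=
    (hsym y z).trans (mul_le_mul_of_nonneg_left hyz.le (zero_le_one.trans hCsym))
  calc d x y ≤ Cd * max (d x z) (d z y) := htri x y z
    _ ≤ Cd * (Csym * s) := mul_le_mul_of_nonneg_left (max_le hxz' hzy) hCd.le
    _ < r := hsr

theorem QTotallyBounded.closure (hself : ∀ x, d x x = 0) (hCsym : 1 ≤ Csym)
    (hsym : ∀ x y, d y x ≤ Csym * d x y) (hCd : 0 < Cd)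
    (htri : ∀ x y z, d x y ≤ Cd * max (d x z) (d z y)) {S : Set X} (hS : QTotallyBounded d S) :
    QTotallyBounded d (closure[quasiMetricTopology d] S) := by
  let _ := quasiMetricTopology d
  intro r hr
  obtain ⟨s, hs, hsr⟩ := exists_pos_mul_lt hr (Cd * Csym)
  obtain ⟨T, hT, hST⟩ := hS s hs
  refine ⟨T, hT, (closure_mono hST).trans ?_⟩
  rw [hT.closure_biUnion]
  exact iUnion₂_mono fun y _ =>
    closure_qball_subset hself hCsym hsym hCd htri y hs (by rwa [← mul_assoc])

theorem iUnion_interior_qball_eq_univ (hself : ∀ x, d x x = 0) (hCsym : 0 < Csym)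
    (hsym : ∀ x y, d y x ≤ Csym * d x y) (hCd : 0 < Cd)
    (htri : ∀ x y z, d x y ≤ Cd * max (d x z) (d z y)) {D : Set X}
    (hD : @Dense X (quasiMetricTopology d) D) {s : ℝ} (hs : 0 < s) :
    ⋃ u ∈ D, @interior X (quasiMetricTopology d) (qball d u s) = univ := by
  refine eq_univ_iff_forall.2 fun x => mem_iUnion₂.2 ?_
  obtain ⟨u, huD, hxu⟩ :=
    exists_mem_qball_of_mem_closure hself hCd htri (hD x) (by positivity : 0 < s / Cd / Csym)
  have hux : d u x < s / Cd :=
    (hsym x u).trans_lt (by rwa [← lt_div_iff₀' hCsym])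
  refine ⟨u, huD, mem_interior_of_qball_subset hself hCd htri (by positivity : 0 < s / Cd)
    fun z hz => ?_⟩
  calc d u z ≤ Cd * max (d u x) (d x z) := htri u z x
    _ < Cd * (s / Cd) := mul_lt_mul_of_pos_left (max_lt hux hz) hCd
    _ = s := mul_div_cancel₀ s hCd.ne'

theorem exists_finite_measure_compl_iUnion_qball_lt (hself : ∀ x, d x x = 0)
    (hCsym : 0 < Csym) (hsym : ∀ x y, d y x ≤ Csym * d x y) (hCd : 0 < Cd)
    (htri : ∀ x y z, d x y ≤ Cd * max (d x z) (d z y))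
    [@TopologicalSpace.SeparableSpace X (quasiMetricTopology d)] [MeasurableSpace X]
    (hborel : ∀ s : Set X, IsOpen[quasiMetricTopology d] s → MeasurableSet s)
    (μ : Measure X) [IsFiniteMeasure μ] {r : ℝ} (hr : 0 < r) {δ : ℝ≥0∞} (hδ : 0 < δ) :
    ∃ T : Set X, T.Finite ∧ μ (⋃ u ∈ T, qball d u r)ᶜ < δ := by
  let _ := quasiMetricTopology d
  obtain ⟨D, hDc, hD⟩ := TopologicalSpace.exists_countable_dense X
  have := hDc.to_subtype
  have hcov : ⋃ u : D, interior (qball d u r) = univ := by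
    rw [iUnion_subtype]; exact iUnion_interior_qball_eq_univ hself hCsym hsym hCd htri hD hr
  obtain ⟨t, ht⟩ := exists_finset_measure_compl_iUnion_lt (μ := μ)
    (fun u => hborel _ isOpen_interior) hcov hδ
  refine ⟨(↑) '' (t : Set D), t.finite_toSet.image _, lt_of_le_of_lt (measure_mono ?_) ht⟩
  rw [biUnion_image]
  exact compl_subset_compl.2 (iUnion₂_mono fun u _ => interior_subset)

end QuasiMetric

theorem ulam_like_general (d : X → X → ℝ)
    (heq : ∀ x y, d x y = 0 ↔ x = y)
    (Csym : ℝ) (hCsym : 1 ≤ Csym) (hsym : ∀ x y, d y x ≤ Csym * d x y)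
    (Cd : ℝ) (hCd : 1 ≤ Cd) (htri : ∀ x y z, d x y ≤ Cd * max (d x z) (d z y))
    (hsep : @TopologicalSpace.SeparableSpace X (quasiMetricTopology d))
    [m : MeasurableSpace X]
    (hborel : ∀ s : Set X, IsOpen[quasiMetricTopology d] s → MeasurableSet s)
    (μ : Measure X) (hfin : μ Set.univ < ⊤)
    (ε : ℝ≥0∞) (hε : 0 < ε) :
    ∃ G : Set X, IsClosed[quasiMetricTopology d] G ∧ QTotallyBounded d G ∧
      μ Gᶜ < ε := by
  let _ := quasiMetricTopology d
  have : IsFiniteMeasure μ := ⟨hfin⟩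
  have hself x : d x x = 0 := (heq x x).2 rfl
  have hCd0 : 0 < Cd := zero_lt_one.trans_le hCd
  obtain ⟨δ, hδ, hδε⟩ := ENNReal.exists_pos_sum_of_countable hε.ne' ℕ
  have hT (k : ℕ) : ∃ T : Set X, T.Finite ∧ μ (⋃ u ∈ T, qball d u (1 / (k + 1)))ᶜ < δ k :=
    exists_finite_measure_compl_iUnion_qball_lt hself (zero_lt_one.trans_le hCsym) hsym hCd0
      htri hborel μ Nat.one_div_pos_of_nat (ENNReal.coe_pos.2 (hδ k))
  choose T hTfin hTμ using hT
  set F := ⋂ k : ℕ, ⋃ u ∈ T k, qball d u (1 / (k + 1))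
  have hF : QTotallyBounded d F := fun r hr => by
    obtain ⟨k, hk⟩ := exists_nat_one_div_lt hr
    exact ⟨T k, hTfin k, (iInter_subset _ k).trans
      (iUnion₂_mono fun u _ y hy => lt_trans (α := ℝ) hy hk)⟩
  refine ⟨closure F, isClosed_closure, hF.closure hself hCsym hsym hCd0 htri, ?_⟩
  calc μ (closure F)ᶜ ≤ μ Fᶜ := measure_mono (compl_subset_compl.2 subset_closure)
    _ ≤ ∑' k, μ (⋃ u ∈ T k, qball d u (1 / (k + 1)))ᶜ := by
      rw [compl_iInter]; exact measure_iUnion_le _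
    _ ≤ ∑' k, (δ k : ℝ≥0∞) := ENNReal.tsum_le_tsum fun k => (hTμ k).le
    _ < ε := hδε

/-- Ulam-like theorem: on a separable quasi-metric space with a
finite nonnegative Borel measure `μ`, for any `ε > 0` there is a closed and
totally bounded set `G` with `μ(X \ G) < ε`. -/
theorem ulam_like (d : X → X → ℝ)
    (hnn : ∀ x y, 0 ≤ d x y)
    (heq : ∀ x y, d x y = 0 ↔ x = y)
    (Csym : ℝ) (hCsym : 1 ≤ Csym) (hsym : ∀ x y, d y x ≤ Csym * d x y)
    (Cd : ℝ) (hCd : 1 ≤ Cd) (htri : ∀ x y z, d x y ≤ Cd * max (d x z) (d z y))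
    (hsep : @TopologicalSpace.SeparableSpace X (quasiMetricTopology d))
    [m : MeasurableSpace X]
    (hborel : ∀ s : Set X, IsOpen[quasiMetricTopology d] s → MeasurableSet s)
    (μ : Measure X) (hfin : μ Set.univ < ⊤)
    (ε : ℝ≥0∞) (hε : 0 < ε) :
    ∃ G : Set X, IsClosed[quasiMetricTopology d] G ∧ QTotallyBounded d G ∧
      μ Gᶜ < ε :=
  ulam_like_general d heq Csym hCsym hsym Cd hCd htri hsep (m := m) hborel μ hfin ε hε
end

section
/- A quasi-metric space (X,d) is separable if and only if there exists a nonnegative Borel measure on (X,d) such that all balls with respect to d are measurable and have positive and finite measure. -/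
open Set MeasureTheory Topology
open scoped ENNReal NNReal

variable {X : Type*}

/-!
Separable ⇒ measure: put mass `2⁻ⁿ` at the `n`-th point of a countable dense set; every ball
contains a neighbourhood of its centre, hence a point of that set.

Measure ⇒ separable: the balls `B(x₀, n + 1)` exhaust `X`, so `μ` is σ-finite. For `ρ > 0`, a
maximal family of points with pairwise disjoint `ρ`-balls is then countable, because these balls
have positive measure; by maximality every point lies within `Cd * Csym * ρ` of the family. The
union of these families over `ρ = 1 / (k + 1)` is a countable dense set.
-/

theorem Set.exists_maximal_pairwiseDisjoint {ι α : Type*} (f : ι → Set α) :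
    ∃ S : Set ι, Maximal (fun S => S.PairwiseDisjoint f) S :=
  zorn_subset {S : Set ι | S.PairwiseDisjoint f} fun c hc hchain =>
    ⟨⋃₀ c, (pairwiseDisjoint_sUnion hchain.directedOn).2 hc, fun _ => subset_sUnion_of_mem⟩

theorem Maximal.exists_not_disjoint {ι α : Type*} {f : ι → Set α} {S : Set ι}
    (hS : Maximal (fun S => S.PairwiseDisjoint f) S) {i : ι} (hi : (f i).Nonempty) :
    ∃ j ∈ S, ¬Disjoint (f i) (f j) := by
  by_contra! h
  by_cases hiS : i ∈ S
  · exact hi.ne_empty (disjoint_self.1 (h i hiS))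
  · exact hiS (hS.mem_of_prop_insert (hS.prop.insert fun j hj _ => h j hj))

theorem Set.PairwiseDisjoint.countable_of_measure_pos {ι α : Type*} [MeasurableSpace α]
    {μ : Measure α} [SFinite μ] {f : ι → Set α} {S : Set ι} (hS : S.PairwiseDisjoint f)
    (hmeas : ∀ i ∈ S, MeasurableSet (f i)) (hpos : ∀ i ∈ S, 0 < μ (f i)) : S.Countable := by
  have hcount := Measure.countable_meas_pos_of_disjoint_iUnion (μ := μ)
    (As := fun i : S => f i) (fun i => hmeas i i.2) (hS.subtype _ _)
  have huniv : {i : S | 0 < μ (f i)} = univ := eq_univ_of_forall fun i => hpos i i.2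
  exact countable_coe_iff.1 (countable_univ_iff.1 (huniv ▸ hcount))

theorem Set.Countable.exists_isFiniteMeasure_pos_of_inter_nonempty {α : Type*}
    [MeasurableSpace α] {D : Set α} (hD : D.Countable) :
    ∃ μ : Measure α, IsFiniteMeasure μ ∧ ∀ s, (s ∩ D).Nonempty → 0 < μ s := by
  rcases D.eq_empty_or_nonempty with rfl | hne
  · exact ⟨0, inferInstance, by simp⟩
  obtain ⟨f, rfl⟩ := hD.exists_eq_range hne
  refine ⟨Measure.sum fun n => (2⁻¹ : ℝ≥0∞) ^ n • Measure.dirac (f n), ⟨?_⟩, ?_⟩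
  · simp [Measure.sum_apply _ MeasurableSet.univ, ENNReal.tsum_geometric]
  · rintro s ⟨_, hs, n, rfl⟩
    calc 0 < (2⁻¹ : ℝ≥0∞) ^ n := ENNReal.pow_pos (by simp) n
      _ = ((2⁻¹ : ℝ≥0∞) ^ n • Measure.dirac (f n)) s := by
        rw [Measure.smul_apply, Measure.dirac_apply_of_mem hs, smul_eq_mul, mul_one]
      _ ≤ _ := Measure.le_iff'.1 (Measure.le_sum _ n) s

section QuasiMetric

variable {d : X → X → ℝ} {Cd : ℝ}

theorem qball_subset_qball_of_mem (hCd : 0 < Cd)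
    (htri : ∀ x y z, d x y ≤ Cd * max (d x z) (d z y)) {x y : X} {r : ℝ}
    (hy : y ∈ qball d x (r / Cd)) : qball d y (r / Cd) ⊆ qball d x r := fun z hz =>
  calc d x z ≤ Cd * max (d x y) (d y z) := htri x z y
    _ < Cd * (r / Cd) := mul_lt_mul_of_pos_left (max_lt hy hz) hCd
    _ = r := mul_div_cancel₀ r hCd.ne'

theorem qball_mem_nhds (h0 : ∀ x, d x x = 0) (hCd : 0 < Cd)
    (htri : ∀ x y z, d x y ≤ Cd * max (d x z) (d z y)) (x : X) {r : ℝ} (hr : 0 < r) :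
    qball d x r ∈ @nhds X (quasiMetricTopology d) x := by
  let := quasiMetricTopology d
  refine mem_nhds_iff.2 ⟨{y | ∃ s > 0, qball d y s ⊆ qball d x r}, ?_, ?_, r, hr, subset_rfl⟩
  · rintro y ⟨s, hs, hsub⟩
    exact hsub (show d y y < s by rwa [h0])
  · rintro y ⟨s, hs, hsub⟩
    exact ⟨s / Cd, div_pos hs hCd, fun z hz =>
      ⟨s / Cd, div_pos hs hCd, (qball_subset_qball_of_mem hCd htri hz).trans hsub⟩⟩

theorem dense_iff_forall_qball_inter_nonempty (h0 : ∀ x, d x x = 0) (hCd : 0 < Cd)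
    (htri : ∀ x y z, d x y ≤ Cd * max (d x z) (d z y)) {D : Set X} :
    @Dense X (quasiMetricTopology d) D ↔ ∀ x r, 0 < r → (qball d x r ∩ D).Nonempty := by
  let := quasiMetricTopology d
  refine ⟨fun hD x r hr => ?_, fun h => dense_iff_inter_open.2 fun U hU ⟨x, hx⟩ => ?_⟩
  · simpa only [inter_comm] using hD.inter_nhds_nonempty (qball_mem_nhds h0 hCd htri x hr)
  · obtain ⟨r, hr, hsub⟩ := hU x hx
    exact (h x r hr).mono (inter_subset_inter_left _ hsub)

theorem lt_of_mem_qball_of_mem_qball {Csym : ℝ} (hCsym : 1 ≤ Csym)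
    (hsym : ∀ x y, d y x ≤ Csym * d x y) (hCd : 0 < Cd)
    (htri : ∀ x y z, d x y ≤ Cd * max (d x z) (d z y)) {x y z : X} {ρ : ℝ} (hρ : 0 < ρ)
    (hx : z ∈ qball d x ρ) (hy : z ∈ qball d y ρ) : d x y < Cd * Csym * ρ := by
  have hxz : d x z < Csym * ρ := lt_of_lt_of_le hx (le_mul_of_one_le_left hρ.le hCsym)
  have hzy : d z y < Csym * ρ :=
    lt_of_le_of_lt (hsym y z) (mul_lt_mul_of_pos_left hy (by linarith))
  calc d x y ≤ Cd * max (d x z) (d z y) := htri x y z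
    _ < Cd * (Csym * ρ) := mul_lt_mul_of_pos_left (max_lt hxz hzy) hCd
    _ = Cd * Csym * ρ := (mul_assoc _ _ _).symm

theorem sigmaFinite_of_qball_lt_top [MeasurableSpace X] {μ : Measure X}
    (hfin : ∀ x r, 0 < r → μ (qball d x r) < ∞) : SigmaFinite μ := by
  rcases isEmpty_or_nonempty X with hX | ⟨⟨x₀⟩⟩
  · rw [Subsingleton.elim μ 0]
    infer_instance
  refine Measure.sigmaFinite_of_countable (countable_range fun n : ℕ => qball d x₀ (n + 1))
    (forall_mem_range.2 fun n => hfin x₀ _ (by positivity)) (eq_univ_of_forall fun x => ?_)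
  obtain ⟨n, hn⟩ := exists_nat_gt (d x₀ x)
  exact mem_sUnion_of_mem (show d x₀ x < n + 1 by linarith) (mem_range_self n)

theorem exists_countable_qball_net [MeasurableSpace X] {μ : Measure X} [SFinite μ]
    (hmeas : ∀ x r, 0 < r → MeasurableSet (qball d x r))
    (hpos : ∀ x r, 0 < r → 0 < μ (qball d x r)) (h0 : ∀ x, d x x = 0) {ρ : ℝ} (hρ : 0 < ρ) :
    ∃ S : Set X, S.Countable ∧ ∀ x, ∃ y ∈ S, ¬Disjoint (qball d x ρ) (qball d y ρ) := by
  obtain ⟨S, hS⟩ := exists_maximal_pairwiseDisjoint fun y => qball d y ρ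
  refine ⟨S, hS.prop.countable_of_measure_pos (μ := μ) (fun y _ => hmeas y ρ hρ)
    (fun y _ => hpos y ρ hρ), fun x => hS.exists_not_disjoint ⟨x, ?_⟩⟩
  show d x x < ρ
  rwa [h0]

theorem exists_isFiniteMeasure_qball_pos (h0 : ∀ x, d x x = 0) (hCd : 0 < Cd)
    (htri : ∀ x y z, d x y ≤ Cd * max (d x z) (d z y))
    (hsep : @TopologicalSpace.SeparableSpace X (quasiMetricTopology d)) :
    ∃ μ : @Measure X ⊤, IsFiniteMeasure μ ∧ ∀ x r, 0 < r → 0 < μ (qball d x r) := by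
  let := quasiMetricTopology d
  obtain ⟨D, hDc, hDd⟩ := TopologicalSpace.exists_countable_dense X
  obtain ⟨μ, hfin, hpos⟩ := @Countable.exists_isFiniteMeasure_pos_of_inter_nonempty X ⊤ D hDc
  exact ⟨μ, hfin, fun x r hr =>
    hpos _ ((dense_iff_forall_qball_inter_nonempty h0 hCd htri).1 hDd x r hr)⟩

theorem separableSpace_of_qball_measure [MeasurableSpace X] (μ : Measure X)
    (hmeas : ∀ x r, 0 < r → MeasurableSet (qball d x r))
    (hpos : ∀ x r, 0 < r → 0 < μ (qball d x r)) (hfin : ∀ x r, 0 < r → μ (qball d x r) < ∞)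
    (h0 : ∀ x, d x x = 0) {Csym : ℝ} (hCsym : 1 ≤ Csym) (hsym : ∀ x y, d y x ≤ Csym * d x y)
    (hCd : 0 < Cd) (htri : ∀ x y z, d x y ≤ Cd * max (d x z) (d z y)) :
    @TopologicalSpace.SeparableSpace X (quasiMetricTopology d) := by
  let := quasiMetricTopology d
  have := sigmaFinite_of_qball_lt_top hfin
  have hρ (k : ℕ) : (0 : ℝ) < 1 / (k + 1) := Nat.one_div_pos_of_nat
  choose S hS hnet using fun k => exists_countable_qball_net hmeas hpos h0 (hρ k)
  refine ⟨⋃ k, S k, countable_iUnion hS,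
    (dense_iff_forall_qball_inter_nonempty h0 hCd htri).2 fun x r hr => ?_⟩
  obtain ⟨k, hk⟩ := exists_nat_one_div_lt (show 0 < r / (Cd * Csym) by positivity)
  obtain ⟨y, hyS, hxy⟩ := hnet k x
  obtain ⟨z, hzx, hzy⟩ := not_disjoint_iff.1 hxy
  refine ⟨y, ?_, mem_iUnion_of_mem k hyS⟩
  calc d x y < Cd * Csym * (1 / (k + 1)) :=
        lt_of_mem_qball_of_mem_qball hCsym hsym hCd htri (hρ k) hzx hzy
    _ < r := by rwa [lt_div_iff₀' (by positivity)] at hk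

end QuasiMetric

theorem separable_iff_exists_measure_general (d : X → X → ℝ)
    (heq : ∀ x y, d x y = 0 ↔ x = y)
    (Csym : ℝ) (hCsym : 1 ≤ Csym) (hsym : ∀ x y, d y x ≤ Csym * d x y)
    (Cd : ℝ) (hCd : 1 ≤ Cd) (htri : ∀ x y z, d x y ≤ Cd * max (d x z) (d z y)) :
    @TopologicalSpace.SeparableSpace X (quasiMetricTopology d) ↔
      ∃ (m : MeasurableSpace X) (μ : @Measure X m),
        (∀ s : Set X, IsOpen[quasiMetricTopology d] s → @MeasurableSet X m s) ∧
        (∀ (x : X) (r : ℝ), 0 < r →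
          @MeasurableSet X m (qball d x r) ∧
          0 < μ (qball d x r) ∧ μ (qball d x r) < ⊤) := by
  have h0 (x : X) : d x x = 0 := (heq x x).2 rfl
  have hCd0 : 0 < Cd := zero_lt_one.trans_le hCd
  constructor
  · intro hsep
    obtain ⟨μ, hfin, hpos⟩ := exists_isFiniteMeasure_qball_pos h0 hCd0 htri hsep
    exact ⟨⊤, μ, fun _ _ => MeasurableSpace.measurableSet_top, fun x r hr =>
      ⟨MeasurableSpace.measurableSet_top, hpos x r hr, measure_lt_top μ _⟩⟩
  · rintro ⟨m, μ, -, hball⟩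
    exact separableSpace_of_qball_measure μ (fun x r hr => (hball x r hr).1)
      (fun x r hr => (hball x r hr).2.1) (fun x r hr => (hball x r hr).2.2) h0 hCsym hsym hCd0
      htri

/-- a quasi-metric space is separable iff there exists a
nonnegative Borel measure for which all `d`-balls are measurable and have
positive and finite measure. -/
theorem separable_iff_exists_measure (d : X → X → ℝ)
    (hnn : ∀ x y, 0 ≤ d x y)
    (heq : ∀ x y, d x y = 0 ↔ x = y)
    (Csym : ℝ) (hCsym : 1 ≤ Csym) (hsym : ∀ x y, d y x ≤ Csym * d x y)
    (Cd : ℝ) (hCd : 1 ≤ Cd) (htri : ∀ x y z, d x y ≤ Cd * max (d x z) (d z y)) :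
    @TopologicalSpace.SeparableSpace X (quasiMetricTopology d) ↔
      ∃ (m : MeasurableSpace X) (μ : @Measure X m),
        (∀ s : Set X, IsOpen[quasiMetricTopology d] s → @MeasurableSet X m s) ∧
        (∀ (x : X) (r : ℝ), 0 < r →
          @MeasurableSet X m (qball d x r) ∧
          0 < μ (qball d x r) ∧ μ (qball d x r) < ⊤) :=
  separable_iff_exists_measure_general d heq Csym hCsym hsym Cd hCd htri
end

section
/- Let (X,d,μ) be a quasi-metric-measure space (all d-balls measurable with positive finite measure). Then (X,d) is totally bounded if and only if μ(X) < ∞ and for every r > 0, inf_{x ∈ X} μ(B_d(x,r)) > 0. -/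
open Set MeasureTheory Topology
open scoped ENNReal NNReal

variable {X : Type*}

/-!
If finitely many `ρ`-balls cover `X`, then every `r`-ball `B(x, r)` contains the `ρ`-ball of the
cover through `x`, as soon as `ρ ≤ r / (Cd * Csym)`; so its measure is at least the least of
finitely many positive numbers. Conversely, if `μ X < ∞` and all `ρ`-balls have measure `≥ ε > 0`,
then at most `μ X / ε` pairwise disjoint `ρ`-balls fit into `X`, and the centres of a largest such
family form a finite `r`-net.
-/

theorem Finset.exists_max_card_of_card_le {α : Type*} {P : Finset α → Prop} (h₀ : P ∅) (N : ℕ)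
    (hN : ∀ s, P s → s.card ≤ N) : ∃ s, P s ∧ ∀ t, P t → t.card ≤ s.card := by
  classical
  let Q : ℕ → Prop := fun n => ∃ s, P s ∧ s.card = n
  obtain ⟨s, hs, hcard⟩ : Q (Nat.findGreatest Q N) :=
    Nat.findGreatest_spec (Nat.zero_le N) ⟨∅, h₀, rfl⟩
  exact ⟨s, hs, fun t ht => hcard ▸ Nat.le_findGreatest (hN t ht) ⟨t, ht, rfl⟩⟩

namespace MeasureTheory

variable {m : MeasurableSpace X} {μ : Measure X}

theorem card_mul_le_measure_univ {ι : Type*} {s : Finset ι} {B : ι → Set X} {ε : ℝ≥0∞}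
    (hB : ∀ i ∈ s, MeasurableSet (B i)) (hε : ∀ i ∈ s, ε ≤ μ (B i))
    (hdisj : (s : Set ι).PairwiseDisjoint B) : s.card * ε ≤ μ univ :=
  calc s.card * ε = ∑ _i ∈ s, ε := by rw [Finset.sum_const, nsmul_eq_mul]
    _ ≤ ∑ i ∈ s, μ (B i) := Finset.sum_le_sum hε
    _ ≤ μ univ := sum_measure_le_measure_univ (fun i hi => (hB i hi).nullMeasurableSet)
      hdisj.aedisjoint

theorem exists_card_le_of_pairwiseDisjoint {ι : Type*} {B : ι → Set X} {ε : ℝ≥0∞}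
    (hμ : μ univ < ⊤) (hε : 0 < ε) (hB : ∀ i, MeasurableSet (B i)) (hBε : ∀ i, ε ≤ μ (B i)) :
    ∃ N : ℕ, ∀ s : Finset ι, (s : Set ι).PairwiseDisjoint B → s.card ≤ N := by
  obtain ⟨N, hN⟩ := ENNReal.exists_nat_gt (ENNReal.div_lt_top hμ.ne hε.ne').ne
  refine ⟨N, fun s hs => ?_⟩
  have hle : (s.card : ℝ≥0∞) ≤ μ univ / ε :=
    (ENNReal.le_div_iff_mul_le (Or.inl hε.ne') (Or.inr hμ.ne)).2
      (card_mul_le_measure_univ (fun i _ => hB i) (fun i _ => hBε i) hs)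
  exact_mod_cast (hle.trans_lt hN).le

end MeasureTheory

structure HasQuasiMetricConstants (d : X → X → ℝ) (Csym Cd : ℝ) : Prop where
  one_le_Csym : 1 ≤ Csym
  le_mul_swap : ∀ x y, d y x ≤ Csym * d x y
  one_le_Cd : 1 ≤ Cd
  le_mul_max : ∀ x y z, d x y ≤ Cd * max (d x z) (d z y)

namespace HasQuasiMetricConstants

variable {d : X → X → ℝ} {Csym Cd r : ℝ}

theorem radius_pos (hd : HasQuasiMetricConstants d Csym Cd) (hr : 0 < r) :
    0 < r / (Cd * Csym) :=
  div_pos hr (mul_pos (one_pos.trans_le hd.one_le_Cd) (one_pos.trans_le hd.one_le_Csym))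

theorem lt_of_le_mul_max (hd : HasQuasiMetricConstants d Csym Cd) (hr : 0 < r) {t a b : ℝ}
    (ht : t ≤ Cd * max (Csym * a) b) (ha : a < r / (Cd * Csym)) (hb : b < r / (Cd * Csym)) :
    t < r := by
  have hCd : 0 < Cd := one_pos.trans_le hd.one_le_Cd
  have hCsym : 0 < Csym := one_pos.trans_le hd.one_le_Csym
  have hb' : b < Csym * (r / (Cd * Csym)) :=
    hb.trans_le (le_mul_of_one_le_left (hd.radius_pos hr).le hd.one_le_Csym)
  calc t ≤ Cd * max (Csym * a) b := ht
    _ < Cd * (Csym * (r / (Cd * Csym))) :=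
      mul_lt_mul_of_pos_left (max_lt (mul_lt_mul_of_pos_left ha hCsym) hb') hCd
    _ = r := by field_simp

theorem qball_subset_qball (hd : HasQuasiMetricConstants d Csym Cd) (hr : 0 < r) {x y : X}
    (hx : x ∈ qball d y (r / (Cd * Csym))) : qball d y (r / (Cd * Csym)) ⊆ qball d x r := by
  intro z hz
  refine hd.lt_of_le_mul_max hr ((hd.le_mul_max x z y).trans ?_) hx hz
  gcongr
  · exact one_pos.le.trans hd.one_le_Cd
  · exact hd.le_mul_swap y x

theorem lt_of_mem_qball_of_mem_qball (hd : HasQuasiMetricConstants d Csym Cd) (hr : 0 < r)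
    {x y w : X} (hx : w ∈ qball d x (r / (Cd * Csym))) (hy : w ∈ qball d y (r / (Cd * Csym))) :
    d x y < r := by
  refine hd.lt_of_le_mul_max hr ((hd.le_mul_max x y w).trans ?_) hy hx
  rw [max_comm]
  gcongr
  · exact one_pos.le.trans hd.one_le_Cd
  · exact hd.le_mul_swap y w

theorem iInf_measure_qball_pos_of_finset_cover [MeasurableSpace X] {μ : Measure X}
    (hd : HasQuasiMetricConstants d Csym Cd) (hr : 0 < r)
    (hpos : ∀ y, 0 < μ (qball d y (r / (Cd * Csym)))) {T : Finset X}
    (hT : univ ⊆ ⋃ y ∈ T, qball d y (r / (Cd * Csym))) : 0 < ⨅ x, μ (qball d x r) := by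
  have hε : 0 < T.inf fun y => μ (qball d y (r / (Cd * Csym))) :=
    (Finset.lt_inf_iff ENNReal.zero_lt_top).2 fun y _ => hpos y
  refine hε.trans_le (le_iInf fun x => ?_)
  obtain ⟨y, hy, hxy⟩ := mem_iUnion₂.1 (hT (mem_univ x))
  exact (Finset.inf_le hy).trans (measure_mono (hd.qball_subset_qball hr hxy))

theorem univ_subset_biUnion_qball_of_max_card (hd : HasQuasiMetricConstants d Csym Cd)
    (hr : 0 < r) (hself : ∀ x, d x x = 0) {s : Finset X}
    (hs : (s : Set X).PairwiseDisjoint (qball d · (r / (Cd * Csym))))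
    (hmax : ∀ t : Finset X, (t : Set X).PairwiseDisjoint (qball d · (r / (Cd * Csym))) →
      t.card ≤ s.card) :
    univ ⊆ ⋃ y ∈ s, qball d y r := by
  classical
  intro z _
  by_contra hzr
  have hz : z ∉ s := fun hz => hzr (mem_iUnion₂.2 ⟨z, hz, show d z z < r by rwa [hself]⟩)
  have hins : (insert z (s : Set X)).PairwiseDisjoint (qball d · (r / (Cd * Csym))) :=
    pairwiseDisjoint_insert.2 ⟨hs, fun y hy _ => disjoint_left.2 fun w hzw hyw =>
      hzr (mem_iUnion₂.2 ⟨y, hy, hd.lt_of_mem_qball_of_mem_qball hr hyw hzw⟩)⟩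
  have hcard := hmax (insert z s) (by rwa [Finset.coe_insert])
  rw [Finset.card_insert_of_notMem hz] at hcard
  omega

end HasQuasiMetricConstants

theorem totallyBounded_iff_finite_and_inf_ball_pos_general (d : X → X → ℝ)
    [m : MeasurableSpace X]
    (heq : ∀ x y, d x y = 0 ↔ x = y)
    (Csym : ℝ) (hCsym : 1 ≤ Csym) (hsym : ∀ x y, d y x ≤ Csym * d x y)
    (Cd : ℝ) (hCd : 1 ≤ Cd) (htri : ∀ x y z, d x y ≤ Cd * max (d x z) (d z y))
    (μ : Measure X)
    (hmeasB : ∀ (x : X) (r : ℝ), 0 < r → MeasurableSet (qball d x r))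
    (hposB : ∀ (x : X) (r : ℝ), 0 < r → 0 < μ (qball d x r))
    (hfinB : ∀ (x : X) (r : ℝ), 0 < r → μ (qball d x r) < ⊤)
    :
    (∀ r : ℝ, 0 < r → ∃ T : Set X, T.Finite ∧ Set.univ ⊆ ⋃ y ∈ T, qball d y r) ↔
      (μ Set.univ < ⊤ ∧ ∀ r : ℝ, 0 < r → 0 < ⨅ x : X, μ (qball d x r)) := by
  have hd : HasQuasiMetricConstants d Csym Cd := ⟨hCsym, hsym, hCd, htri⟩
  constructor
  · intro htb
    refine ⟨?_, fun r hr => ?_⟩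
    · obtain ⟨T, hT, hcover⟩ := htb 1 one_pos
      exact (measure_mono hcover).trans_lt (measure_biUnion_lt_top hT fun y _ => hfinB y 1 one_pos)
    · have hρ := hd.radius_pos hr
      obtain ⟨T, hT, hcover⟩ := htb _ hρ
      lift T to Finset X using hT
      exact hd.iInf_measure_qball_pos_of_finset_cover hr (fun y => hposB y _ hρ) hcover
  · rintro ⟨hμ, hinf⟩ r hr
    have hρ := hd.radius_pos hr
    obtain ⟨N, hN⟩ := exists_card_le_of_pairwiseDisjoint hμ (hinf _ hρ) (fun y => hmeasB y _ hρ)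
      (iInf_le _)
    obtain ⟨s, hs, hmax⟩ := Finset.exists_max_card_of_card_le (by simp) N hN
    exact ⟨s, s.finite_toSet,
      hd.univ_subset_biUnion_qball_of_max_card hr (fun x => (heq x x).2 rfl) hs hmax⟩

/-- a quasi-metric-measure space is totally bounded iff the
measure is finite and balls of each fixed radius have measure uniformly
bounded away from zero. -/
theorem totallyBounded_iff_finite_and_inf_ball_pos (d : X → X → ℝ)
    [m : MeasurableSpace X]
    (hnn : ∀ x y, 0 ≤ d x y)
    (heq : ∀ x y, d x y = 0 ↔ x = y)
    (Csym : ℝ) (hCsym : 1 ≤ Csym) (hsym : ∀ x y, d y x ≤ Csym * d x y)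
    (Cd : ℝ) (hCd : 1 ≤ Cd) (htri : ∀ x y z, d x y ≤ Cd * max (d x z) (d z y))
    (hborel : ∀ s : Set X, IsOpen[quasiMetricTopology d] s → MeasurableSet s)
    (μ : Measure X)
    (hmeasB : ∀ (x : X) (r : ℝ), 0 < r → MeasurableSet (qball d x r))
    (hposB : ∀ (x : X) (r : ℝ), 0 < r → 0 < μ (qball d x r))
    (hfinB : ∀ (x : X) (r : ℝ), 0 < r → μ (qball d x r) < ⊤)
    :
    (∀ r : ℝ, 0 < r → ∃ T : Set X, T.Finite ∧ Set.univ ⊆ ⋃ y ∈ T, qball d y r) ↔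
      (μ Set.univ < ⊤ ∧ ∀ r : ℝ, 0 < r → 0 < ⨅ x : X, μ (qball d x r)) :=
  totallyBounded_iff_finite_and_inf_ball_pos_general d (m := m) heq Csym hCsym hsym Cd hCd htri μ
    hmeasB hposB hfinB
end

section
/- Let (X,d,μ) be an unbounded quasi-metric-measure space such that μ is (C_d,δ)-doubling for some fixed δ > 0, where C_d is the quasi-subadditivity constant of d, and suppose the mapping x ↦ μ(B_d(x,δ)) is measurable. Then ∫_X 1/μ(B_d(x,δ)) dμ(x) = ∞; consequently μ is not integrable. -/
open Set MeasureTheory Topology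
open scoped ENNReal NNReal

variable {X : Type*}

/-- `μ` is an integrable measure: there is a quasi-metric `ρ` equivalent to
`d` such that for every `r > 0` the map `x ↦ μ(B_ρ(x,r))` is measurable and
`∫_X 1/μ(B_ρ(x,r)) dμ(x) < ∞`. -/
def IntegrableQMeasure [MeasurableSpace X] (d : X → X → ℝ)
    (μ : MeasureTheory.Measure X) : Prop :=
  ∃ ρ : X → X → ℝ,
    (∀ x y, 0 ≤ ρ x y) ∧ (∀ x y, ρ x y = 0 ↔ x = y) ∧
    (∃ C₀ : ℝ, 1 ≤ C₀ ∧ ∀ x y, ρ y x ≤ C₀ * ρ x y) ∧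
    (∃ C₁ : ℝ, 1 ≤ C₁ ∧ ∀ x y z, ρ x y ≤ C₁ * max (ρ x z) (ρ z y)) ∧
    (∃ κ : ℝ, 0 < κ ∧ ∀ x y, κ⁻¹ * ρ x y ≤ d x y ∧ d x y ≤ κ * ρ x y) ∧
    ∀ r : ℝ, 0 < r →
      Measurable (fun x => μ (qball ρ x r)) ∧
      (∫⁻ x, (μ (qball ρ x r))⁻¹ ∂μ) < ⊤

/-!
Pick a base point `p`. By unboundedness there are points arbitrarily far from `p`, so any ball
`B(p,R)` can be enlarged to a ball `B(p,R')` that also contains a δ-ball `B(z,δ)` disjoint from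
`B(p,R)`. For `x ∈ B(z,δ)` one has `B(x,δ) ⊆ B(z,C_d δ)`, so doubling gives
`∫_{B(z,δ)} 1/μ(B(x,δ)) dμ(x) ≥ μ(B(z,δ)) / μ(B(z,C_d δ)) ≥ 1/Δ`. Iterating, the integral over
`X` exceeds `n/Δ` for every `n`. An equivalent quasi-metric `ρ` has smaller balls
`B_ρ(x,δ/κ) ⊆ B_d(x,δ)`, so its integral is infinite as well.
-/

theorem ENNReal.eq_top_of_forall_nat_mul_le {a c : ℝ≥0∞} (hc : c ≠ 0) (h : ∀ n : ℕ, n * c ≤ a) :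
    a = ⊤ := by
  by_contra ha
  obtain ⟨n, hn⟩ := ENNReal.exists_nat_mul_gt hc ha
  exact (h n).not_gt hn

section QuasiMetric

variable {d : X → X → ℝ} {Csym Cd : ℝ}

theorem exists_lt_of_unbounded (hsym : ∀ x y, d y x ≤ Csym * d x y)
    (htri : ∀ x y z, d x y ≤ Cd * max (d x z) (d z y)) (hCsym : 0 ≤ Csym) (hCd : 0 ≤ Cd)
    (hunb : ∀ D : ℝ, ∃ x y : X, D < d x y) (p : X) (D : ℝ) : ∃ z, D < d p z := by
  by_contra! hbdd
  obtain ⟨x, y, hxy⟩ := hunb (Cd * max (Csym * D) D)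
  have : d x y ≤ Cd * max (Csym * D) D :=
    calc d x y ≤ Cd * max (d x p) (d p y) := htri x y p
      _ ≤ Cd * max (Csym * D) D := by
        gcongr
        · exact (hsym p x).trans (by gcongr; exact hbdd x)
        · exact hbdd y
  linarith

theorem qball_subset_qball_mul (htri : ∀ x y z, d x y ≤ Cd * max (d x z) (d z y))
    (hCd : 0 < Cd) {x z : X} {r : ℝ} (hx : x ∈ qball d z r) :
    qball d x r ⊆ qball d z (Cd * r) := fun y hy =>
  (htri z y x).trans_lt (mul_lt_mul_of_pos_left (max_lt hx hy) hCd)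

theorem qball_subset_qball_add (hnn : ∀ x y, 0 ≤ d x y)
    (htri : ∀ x y z, d x y ≤ Cd * max (d x z) (d z y)) (hCd : 0 < Cd) (p z : X) {r : ℝ}
    (hr : 0 < r) : qball d z r ⊆ qball d p (Cd * (d p z + r)) := fun w hw =>
  (htri p w z).trans_lt <| mul_lt_mul_of_pos_left
    (max_lt (by linarith) (by linarith [hnn p z, show d z w < r from hw])) hCd

theorem disjoint_qball_of_lt (hsym : ∀ x y, d y x ≤ Csym * d x y)
    (htri : ∀ x y z, d x y ≤ Cd * max (d x z) (d z y)) (hCsym : 0 ≤ Csym) (hCd : 0 ≤ Cd)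
    {p z : X} {R r : ℝ} (hpz : Cd * max R (Csym * r) < d p z) :
    Disjoint (qball d p R) (qball d z r) := by
  refine Set.disjoint_left.2 fun w (hpw : d p w < R) (hzw : d z w < r) => hpz.not_ge ?_
  calc d p z ≤ Cd * max (d p w) (d w z) := htri p z w
    _ ≤ Cd * max R (Csym * r) := by
      gcongr
      exact (hsym z w).trans (by gcongr)

theorem exists_disjoint_qball_union_subset (hnn : ∀ x y, 0 ≤ d x y)
    (hsym : ∀ x y, d y x ≤ Csym * d x y) (htri : ∀ x y z, d x y ≤ Cd * max (d x z) (d z y))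
    (hCsym : 0 ≤ Csym) (hCd : 1 ≤ Cd) (hunb : ∀ D : ℝ, ∃ x y : X, D < d x y) (p : X) (R : ℝ)
    {r : ℝ} (hr : 0 < r) :
    ∃ z R', Disjoint (qball d p R) (qball d z r) ∧ qball d p R ∪ qball d z r ⊆ qball d p R' := by
  have hCd0 : 0 < Cd := by linarith
  obtain ⟨z, hz⟩ := exists_lt_of_unbounded hsym htri hCsym hCd0.le hunb p (Cd * max R (Csym * r))
  have hRR' : R ≤ Cd * (d p z + r) := by
    nlinarith [hnn p z, le_max_left R (Csym * r), le_max_right R (Csym * r),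
      mul_nonneg hCsym hr.le]
  exact ⟨z, Cd * (d p z + r), disjoint_qball_of_lt hsym htri hCsym hCd0.le hz,
    union_subset (fun w (hw : d p w < R) => hw.trans_le hRR')
      (qball_subset_qball_add hnn htri hCd0 p z hr)⟩

end QuasiMetric

section Measure

variable [MeasurableSpace X] {d : X → X → ℝ} {μ : Measure X}

theorem inv_le_setLIntegral_inv_measure_qball {Cd : ℝ}
    (htri : ∀ x y z, d x y ≤ Cd * max (d x z) (d z y)) (hCd : 0 < Cd) {c : ℝ≥0∞} (hc : c ≠ ⊤)
    {z : X} {r : ℝ} (hmeas : MeasurableSet (qball d z r)) (hpos : μ (qball d z r) ≠ 0)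
    (hfin : μ (qball d z r) ≠ ⊤) (hdoub : μ (qball d z (Cd * r)) ≤ c * μ (qball d z r)) :
    c⁻¹ ≤ ∫⁻ x in qball d z r, (μ (qball d x r))⁻¹ ∂μ := by
  set s := qball d z r
  calc c⁻¹ = ∫⁻ _ in s, (c * μ s)⁻¹ ∂μ := by
        rw [setLIntegral_const, ENNReal.mul_inv (Or.inr hfin) (Or.inl hc), mul_assoc,
          ENNReal.inv_mul_cancel hpos hfin, mul_one]
    _ ≤ ∫⁻ x in s, (μ (qball d x r))⁻¹ ∂μ := setLIntegral_mono' hmeas fun x hx =>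
        ENNReal.inv_le_inv.2 <| (measure_mono (qball_subset_qball_mul htri hCd hx)).trans hdoub

theorem exists_nat_mul_le_setLIntegral_qball {f : X → ℝ≥0∞} {c : ℝ≥0∞} {p : X} {r : ℝ}
    (hmeas : ∀ z, MeasurableSet (qball d z r)) (hball : ∀ z, c ≤ ∫⁻ x in qball d z r, f x ∂μ)
    (hgrow : ∀ R, ∃ z R', Disjoint (qball d p R) (qball d z r) ∧
      qball d p R ∪ qball d z r ⊆ qball d p R') (n : ℕ) :
    ∃ R, n * c ≤ ∫⁻ x in qball d p R, f x ∂μ := by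
  induction n with
  | zero => exact ⟨0, by simp⟩
  | succ n ih =>
    obtain ⟨R, hR⟩ := ih
    obtain ⟨z, R', hdisj, hsub⟩ := hgrow R
    refine ⟨R', ?_⟩
    calc ((n + 1 : ℕ) : ℝ≥0∞) * c = n * c + c := by push_cast; ring
      _ ≤ (∫⁻ x in qball d p R, f x ∂μ) + ∫⁻ x in qball d z r, f x ∂μ := add_le_add hR (hball z)
      _ = ∫⁻ x in qball d p R ∪ qball d z r, f x ∂μ := (lintegral_union (hmeas z) hdisj).symm
      _ ≤ ∫⁻ x in qball d p R', f x ∂μ := lintegral_mono_set hsub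

theorem not_integrableQMeasure_of_lintegral_eq_top {r : ℝ} (hr : 0 < r)
    (htop : ∫⁻ x, (μ (qball d x r))⁻¹ ∂μ = ⊤) : ¬ IntegrableQMeasure d μ := by
  rintro ⟨ρ, -, -, -, -, ⟨κ, hκ, hκd⟩, hint⟩
  have hsub : ∀ x, qball ρ x (r / κ) ⊆ qball d x r := fun x y (hy : ρ x y < r / κ) =>
    calc d x y ≤ κ * ρ x y := (hκd x y).2
      _ < κ * (r / κ) := mul_lt_mul_of_pos_left hy hκ
      _ = r := by field_simp
  refine (hint (r / κ) (div_pos hr hκ)).2.ne (eq_top_mono ?_ htop)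
  exact lintegral_mono fun x => ENNReal.inv_le_inv.2 (measure_mono (hsub x))

end Measure

theorem unbounded_doubling_not_integrable_general (d : X → X → ℝ)
    [m : MeasurableSpace X]
    (hnn : ∀ x y, 0 ≤ d x y)
    (Csym : ℝ) (hCsym : 1 ≤ Csym) (hsym : ∀ x y, d y x ≤ Csym * d x y)
    (Cd : ℝ) (hCd : 1 ≤ Cd) (htri : ∀ x y z, d x y ≤ Cd * max (d x z) (d z y))
    (μ : Measure X)
    (hmeasB : ∀ (x : X) (r : ℝ), 0 < r → MeasurableSet (qball d x r))
    (hposB : ∀ (x : X) (r : ℝ), 0 < r → 0 < μ (qball d x r))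
    (hfinB : ∀ (x : X) (r : ℝ), 0 < r → μ (qball d x r) < ⊤)
    (hunb : ∀ D : ℝ, ∃ x y : X, D < d x y)
    (δ : ℝ) (hδ : 0 < δ)
    (Δ : ℝ)
    (hdoub : ∀ x : X, μ (qball d x (Cd * δ)) ≤ ENNReal.ofReal Δ * μ (qball d x δ)) :
    (∫⁻ x, (μ (qball d x δ))⁻¹ ∂μ) = ⊤ ∧ ¬ IntegrableQMeasure d μ := by
  obtain ⟨p, -, -⟩ := hunb 0
  have htop : ∫⁻ x, (μ (qball d x δ))⁻¹ ∂μ = ⊤ := by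
    have hball (z : X) : (ENNReal.ofReal Δ)⁻¹ ≤ ∫⁻ x in qball d z δ, (μ (qball d x δ))⁻¹ ∂μ :=
      inv_le_setLIntegral_inv_measure_qball htri (by linarith) ENNReal.ofReal_ne_top
        (hmeasB z δ hδ) (hposB z δ hδ).ne' (hfinB z δ hδ).ne (hdoub z)
    refine ENNReal.eq_top_of_forall_nat_mul_le
      (ENNReal.inv_ne_zero.2 (ENNReal.ofReal_ne_top (r := Δ))) fun n => ?_
    obtain ⟨R, hR⟩ := exists_nat_mul_le_setLIntegral_qball (hmeasB · δ hδ) hball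
      (fun R => exists_disjoint_qball_union_subset hnn hsym htri (by linarith) hCd hunb p R hδ) n
    exact hR.trans (setLIntegral_le_lintegral _ _)
  exact ⟨htop, not_integrableQMeasure_of_lintegral_eq_top hδ htop⟩

/-- on an unbounded quasi-metric-measure space, if `μ` is
`(C_d,δ)`-doubling for some fixed `δ > 0` and `x ↦ μ(B_d(x,δ))` is measurable,
then `∫_X 1/μ(B_d(x,δ)) dμ = ∞`; consequently `μ` is not integrable. -/
theorem unbounded_doubling_not_integrable (d : X → X → ℝ)
    [m : MeasurableSpace X]
    (hnn : ∀ x y, 0 ≤ d x y)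
    (heq : ∀ x y, d x y = 0 ↔ x = y)
    (Csym : ℝ) (hCsym : 1 ≤ Csym) (hsym : ∀ x y, d y x ≤ Csym * d x y)
    (Cd : ℝ) (hCd : 1 ≤ Cd) (htri : ∀ x y z, d x y ≤ Cd * max (d x z) (d z y))
    (hborel : ∀ s : Set X, IsOpen[quasiMetricTopology d] s → MeasurableSet s)
    (μ : Measure X)
    (hmeasB : ∀ (x : X) (r : ℝ), 0 < r → MeasurableSet (qball d x r))
    (hposB : ∀ (x : X) (r : ℝ), 0 < r → 0 < μ (qball d x r))
    (hfinB : ∀ (x : X) (r : ℝ), 0 < r → μ (qball d x r) < ⊤)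
    (hunb : ∀ D : ℝ, ∃ x y : X, D < d x y)
    (δ : ℝ) (hδ : 0 < δ)
    (Δ : ℝ) (hΔ : 1 ≤ Δ)
    (hdoub : ∀ x : X, μ (qball d x (Cd * δ)) ≤ ENNReal.ofReal Δ * μ (qball d x δ))
    (hmeasmap : Measurable fun x => μ (qball d x δ)) :
    (∫⁻ x, (μ (qball d x δ))⁻¹ ∂μ) = ⊤ ∧ ¬ IntegrableQMeasure d μ :=
  unbounded_doubling_not_integrable_general d (m := m) hnn Csym hCsym hsym Cd hCd htri μ hmeasB
    hposB hfinB hunb δ hδ Δ hdoub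
end

section
/- Let μ on [0,∞) (with Euclidean distance) be given by dμ = e^{-1/x^β} dx with β > 0. Then μ is not locally doubling at 0: lim_{x→0⁺} μ(B(0,2x))/μ(B(0,x)) = ∞. However, for every c ∈ (1,∞), δ > 0, and all x ≥ 0, one has μ(B(x,cδ)) ≤ 4c·e^{(2/δ)^β}·μ(B(x,δ)). -/
/-!
The density `e^{-1/x^β}` is at most `1` and increasing on `(0, ∞)`, so the measure of an interval
`(a, b) ⊆ (0, ∞)` lies between `(b - a)` times the density at `a` and `(b - a)` times the density
at `b`. Hence `μ(B(0,2x)) ≥ (x/2) e^{-1/(3x/2)^β}` and `μ(B(0,x)) ≤ x e^{-1/x^β}`, and the ratio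
is at least `e^{(1 - (2/3)^β)/x^β} / 2`, which blows up as `x → 0⁺`. For `x ≥ 0` the ball
`B(x,δ)` contains `(x + δ/2, x + δ)`, on which the density is at least `e^{-(2/δ)^β}`, while
`μ(B(x,cδ)) ≤ 2cδ`.
-/

open Set MeasureTheory Real Filter
open scoped ENNReal Topology

/-- The measure `dμ = e^{-1/x^β} dx` on `[0,∞)`. -/
noncomputable def muExpInv (β : ℝ) : Measure ℝ :=
  (volume.restrict (Set.Ici (0 : ℝ))).withDensity fun x =>
    ENNReal.ofReal (Real.exp (-(1 / x ^ β)))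

lemma muExpInv_apply (β : ℝ) {s : Set ℝ} (hs : MeasurableSet s) :
    muExpInv β s = ∫⁻ x in s ∩ Ici 0, ENNReal.ofReal (exp (-(1 / x ^ β))) := by
  rw [muExpInv, withDensity_apply _ hs, Measure.restrict_restrict hs]

lemma exp_neg_one_div_rpow_monotoneOn {β : ℝ} (hβ : 0 ≤ β) :
    MonotoneOn (fun x : ℝ => exp (-(1 / x ^ β))) (Ioi 0) := fun _ ha _ _ hab =>
  exp_le_exp.2 <| neg_le_neg <|
    one_div_le_one_div_of_le (rpow_pos_of_pos ha β) (rpow_le_rpow (le_of_lt ha) hab hβ)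

lemma muExpInv_Ioo_le (β a b : ℝ) : muExpInv β (Ioo a b) ≤ ENNReal.ofReal (b - a) := by
  rw [muExpInv_apply β measurableSet_Ioo, ← Real.volume_Ioo]
  calc ∫⁻ x in Ioo a b ∩ Ici 0, ENNReal.ofReal (exp (-(1 / x ^ β)))
      ≤ ∫⁻ _ in Ioo a b ∩ Ici 0, 1 := by
        refine setLIntegral_mono measurable_const fun x hx => ?_
        have : 0 ≤ 1 / x ^ β := by have : (0 : ℝ) ≤ x := hx.2; positivity
        simpa using exp_le_one_iff.2 (neg_nonpos.2 this)
    _ = volume (Ioo a b ∩ Ici 0) := setLIntegral_one _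
    _ ≤ volume (Ioo a b) := measure_mono inter_subset_left

lemma le_muExpInv_Ioo {β : ℝ} (hβ : 0 ≤ β) {a : ℝ} (ha : 0 < a) (b : ℝ) :
    ENNReal.ofReal (exp (-(1 / a ^ β)) * (b - a)) ≤ muExpInv β (Ioo a b) := by
  have hpos : Ioo a b ∩ Ici 0 = Ioo a b := inter_eq_left.2 fun x hx => (ha.trans hx.1).le
  rw [muExpInv_apply β measurableSet_Ioo, hpos, ENNReal.ofReal_mul (exp_nonneg _),
    ← Real.volume_Ioo, ← setLIntegral_const]
  exact setLIntegral_mono (by fun_prop) fun x hx => ENNReal.ofReal_le_ofReal <|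
    exp_neg_one_div_rpow_monotoneOn hβ ha (ha.trans hx.1) hx.1.le

lemma muExpInv_Iio_le {β : ℝ} (hβ : 0 ≤ β) {x : ℝ} (hx : 0 < x) :
    muExpInv β (Iio x) ≤ ENNReal.ofReal (exp (-(1 / x ^ β)) * x) := by
  have hpos : Iio x ∩ Ici 0 = Ico 0 x := by
    ext t; simp only [mem_inter_iff, mem_Iio, mem_Ici, mem_Ico, and_comm]
  -- the point `t = 0` is dropped: there the density reads `e^{-(1/0)} = 1`
  rw [muExpInv_apply β measurableSet_Iio, hpos, setLIntegral_congr Ioo_ae_eq_Ico.symm,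
    ENNReal.ofReal_mul (exp_nonneg _)]
  calc ∫⁻ t in Ioo 0 x, ENNReal.ofReal (exp (-(1 / t ^ β)))
      ≤ ∫⁻ _ in Ioo 0 x, ENNReal.ofReal (exp (-(1 / x ^ β))) :=
        setLIntegral_mono measurable_const fun t ht => ENNReal.ofReal_le_ofReal <|
          exp_neg_one_div_rpow_monotoneOn hβ ht.1 hx ht.2.le
    _ = ENNReal.ofReal (exp (-(1 / x ^ β))) * ENNReal.ofReal x := by
        rw [setLIntegral_const, Real.volume_Ioo, sub_zero]

lemma le_muExpInv_Ioo_sub_add {β : ℝ} (hβ : 0 ≤ β) {δ : ℝ} (hδ : 0 < δ) {x : ℝ} (hx : 0 ≤ x) :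
    ENNReal.ofReal (exp (-(2 / δ) ^ β) * (δ / 2)) ≤ muExpInv β (Ioo (x - δ) (x + δ)) := by
  have hδ2 : 0 < δ / 2 := half_pos hδ
  have hdens : exp (-(2 / δ) ^ β) ≤ exp (-(1 / (x + δ / 2) ^ β)) := by
    have h : exp (-(1 / (δ / 2) ^ β)) ≤ exp (-(1 / (x + δ / 2) ^ β)) :=
      exp_neg_one_div_rpow_monotoneOn hβ hδ2 (by positivity : 0 < x + δ / 2) (by linarith)
    rwa [one_div, ← inv_rpow hδ2.le, inv_div] at h
  calc ENNReal.ofReal (exp (-(2 / δ) ^ β) * (δ / 2))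
      ≤ ENNReal.ofReal (exp (-(1 / (x + δ / 2) ^ β)) * (x + δ - (x + δ / 2))) := by
        gcongr; linarith
    _ ≤ muExpInv β (Ioo (x + δ / 2) (x + δ)) := le_muExpInv_Ioo hβ (by positivity) _
    _ ≤ muExpInv β (Ioo (x - δ) (x + δ)) := measure_mono (Ioo_subset_Ioo (by linarith) le_rfl)

lemma muExpInv_Ioo_sub_add_le_mul {β : ℝ} (hβ : 0 ≤ β) (c : ℝ) {δ : ℝ} (hδ : 0 < δ) {x : ℝ}
    (hx : 0 ≤ x) :
    muExpInv β (Ioo (x - c * δ) (x + c * δ)) ≤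
      ENNReal.ofReal (4 * c * exp ((2 / δ) ^ β)) * muExpInv β (Ioo (x - δ) (x + δ)) := by
  calc muExpInv β (Ioo (x - c * δ) (x + c * δ))
      ≤ ENNReal.ofReal (x + c * δ - (x - c * δ)) := muExpInv_Ioo_le β _ _
    _ = ENNReal.ofReal (4 * c * exp ((2 / δ) ^ β)) *
          ENNReal.ofReal (exp (-(2 / δ) ^ β) * (δ / 2)) := by
        rw [← ENNReal.ofReal_mul' (by positivity), exp_neg]
        congr 1
        field_simp
        ring
    _ ≤ _ := by gcongr; exact le_muExpInv_Ioo_sub_add hβ hδ hx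

lemma le_muExpInv_Ioo_div_Ioo {β : ℝ} (hβ : 0 ≤ β) {x : ℝ} (hx : 0 < x) :
    ENNReal.ofReal (exp ((1 - (2 / 3) ^ β) / x ^ β) / 2) ≤
      muExpInv β (Ioo (-(2 * x)) (2 * x)) / muExpInv β (Ioo (-x) x) := by
  have hnum : ENNReal.ofReal (exp (-(1 / (3 / 2 * x) ^ β)) * (x / 2)) ≤
      muExpInv β (Ioo (-(2 * x)) (2 * x)) := by
    have h := le_muExpInv_Ioo hβ (by positivity : 0 < 3 / 2 * x) (2 * x)
    rw [show 2 * x - 3 / 2 * x = x / 2 by ring] at h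
    exact h.trans (measure_mono (Ioo_subset_Ioo (by linarith) le_rfl))
  have hden : muExpInv β (Ioo (-x) x) ≤ ENNReal.ofReal (exp (-(1 / x ^ β)) * x) :=
    (measure_mono Ioo_subset_Iio_self).trans (muExpInv_Iio_le hβ hx)
  have hexp : -(1 / (3 / 2 * x) ^ β) = (1 - (2 / 3) ^ β) / x ^ β - 1 / x ^ β := by
    rw [mul_rpow (by norm_num) hx.le, show (2 / 3 : ℝ) = (3 / 2)⁻¹ by norm_num,
      inv_rpow (by norm_num)]
    field_simp
    ring
  calc ENNReal.ofReal (exp ((1 - (2 / 3) ^ β) / x ^ β) / 2)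
      = ENNReal.ofReal (exp (-(1 / (3 / 2 * x) ^ β)) * (x / 2)) /
          ENNReal.ofReal (exp (-(1 / x ^ β)) * x) := by
        rw [← ENNReal.ofReal_div_of_pos (by positivity), hexp, exp_sub, exp_neg]
        congr 1
        field_simp
    _ ≤ _ := ENNReal.div_le_div hnum hden

lemma tendsto_exp_div_rpow_nhdsGT_zero {k β : ℝ} (hk : 0 < k) (hβ : 0 < β) :
    Tendsto (fun x : ℝ => exp (k / x ^ β)) (𝓝[>] 0) atTop :=
  tendsto_exp_atTop.comp <|
    ((tendsto_rpow_neg_nhdsGT_zero (neg_neg_of_pos hβ)).const_mul_atTop hk).congr' <|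
      eventually_mem_nhdsWithin.mono fun x hx => by
        rw [rpow_neg (le_of_lt hx)]
        exact (div_eq_mul_inv _ _).symm

/-- for `β > 0`, the measure `dμ = e^{-1/x^β}dx` on `[0,∞)` is
not locally doubling at `0`, i.e. `μ(B(0,2x))/μ(B(0,x)) → ∞` as `x → 0⁺`, yet
for every `c > 1`, `δ > 0`, and `x ≥ 0` one has
`μ(B(x,cδ)) ≤ 4c·e^{(2/δ)^β}·μ(B(x,δ))`. -/
theorem muExpInv_not_locally_doubling_but_cdoubling (β : ℝ) (hβ : 0 < β) :
    Tendsto (fun x : ℝ =>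
        muExpInv β (Set.Ioo (-(2 * x)) (2 * x)) / muExpInv β (Set.Ioo (-x) x))
      (nhdsWithin 0 (Set.Ioi 0)) (nhds (⊤ : ℝ≥0∞)) ∧
    ∀ c : ℝ, 1 < c → ∀ δ : ℝ, 0 < δ → ∀ x : ℝ, 0 ≤ x →
      muExpInv β (Set.Ioo (x - c * δ) (x + c * δ)) ≤
        ENNReal.ofReal (4 * c * Real.exp ((2 / δ) ^ β)) *
          muExpInv β (Set.Ioo (x - δ) (x + δ)) := by
  refine ⟨?_, fun c _ δ hδ x hx => muExpInv_Ioo_sub_add_le_mul hβ.le c hδ hx⟩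
  have hk : 0 < 1 - (2 / 3 : ℝ) ^ β := sub_pos.2 (rpow_lt_one (by norm_num) (by norm_num) hβ)
  refine tendsto_nhds_top_mono (ENNReal.tendsto_ofReal_atTop.comp
    ((tendsto_exp_div_rpow_nhdsGT_zero hk hβ).atTop_div_const two_pos)) ?_
  filter_upwards [self_mem_nhdsWithin] with x hx using le_muExpInv_Ioo_div_Ioo hβ.le hx
end

section
/- Let μ on ℝ₊ (with Euclidean distance) be given by dμ = e^{x^β} dx with β ∈ (1,∞). Then μ(ℝ₊) = ∞ and μ is integrable in the sense that for every r > 0, ∫_{ℝ₊} 1/μ(B(x,r)) dμ(x) < ∞. -/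
/-!
The density `e^{x^β}` is at least `1`, so `μ` dominates Lebesgue measure on `ℝ₊` and has infinite
mass. For integrability, the right half `(x + r/2, x + r)` of the ball `B(x, r)` already gives
`μ(B(x, r)) ≥ (r/2) e^{(x + r/2)^β}`, and Bernoulli's inequality gives
`(x + r/2)^β - x^β ≥ (βr/2) x^{β-1}`. Hence the integrand `e^{x^β} / μ(B(x, r))` with respect to
Lebesgue measure is at most `(2/r) e^{-(βr/2) x^{β-1}}`, which is integrable on `ℝ₊` as `β > 1`.
-/

open Set MeasureTheory Real
open scoped ENNReal

/-- The measure `dμ = e^{x^β} dx` on `ℝ₊ = (0,∞)`. -/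
noncomputable def muExpPos (β : ℝ) : Measure ℝ :=
  (volume.restrict (Set.Ioi (0 : ℝ))).withDensity fun x => ENNReal.ofReal (Real.exp (x ^ β))

lemma mul_rpow_sub_one_le_add_rpow_sub_rpow {β x c : ℝ} (hβ : 1 ≤ β) (hx : 0 < x)
    (hc : -x ≤ c) : β * c * x ^ (β - 1) ≤ (x + c) ^ β - x ^ β := by
  have hcx : -1 ≤ c / x := by rw [le_div_iff₀ hx]; linarith
  have hbernoulli := mul_le_mul_of_nonneg_left (one_add_mul_self_le_rpow_one_add hcx hβ)
    (rpow_nonneg hx.le β)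
  rw [← mul_rpow hx.le (by linarith), mul_add, mul_one_add, mul_div_cancel₀ _ hx.ne'] at hbernoulli
  have hpow : x ^ β * (β * (c / x)) = β * c * x ^ (β - 1) := by
    rw [rpow_sub_one hx.ne']; ring
  linarith

lemma integrableOn_exp_neg_mul_rpow {p b : ℝ} (hp : 0 < p) (hb : 0 < b) :
    IntegrableOn (fun x : ℝ => exp (-b * x ^ p)) (Ioi 0) := by
  simpa using integrableOn_rpow_mul_exp_neg_mul_rpow (s := 0) neg_one_lt_zero hp hb

lemma volume_restrict_Ioi_le_muExpPos (β : ℝ) : volume.restrict (Ioi 0) ≤ muExpPos β :=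
  calc volume.restrict (Ioi 0) = (volume.restrict (Ioi 0)).withDensity 1 := withDensity_one.symm
    _ ≤ muExpPos β := withDensity_mono <| (ae_restrict_iff' measurableSet_Ioi).2 <|
        ae_of_all _ fun x hx => by
          simpa using one_le_exp (rpow_nonneg (le_of_lt hx) β)

lemma muExpPos_univ (β : ℝ) : muExpPos β univ = ⊤ :=
  top_le_iff.1 <| calc
    ⊤ = volume.restrict (Ioi (0 : ℝ)) univ := by
      rw [Measure.restrict_apply_univ, volume_Ioi]
    _ ≤ muExpPos β univ := volume_restrict_Ioi_le_muExpPos β univ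

lemma ofReal_mul_exp_rpow_le_muExpPos_Ioo {β a b : ℝ} (hβ : 0 ≤ β) (ha : 0 ≤ a) :
    ENNReal.ofReal ((b - a) * exp (a ^ β)) ≤ muExpPos β (Ioo a b) := by
  have hsub : Ioo a b ⊆ Ioi 0 := fun t ht => ha.trans_lt ht.1
  rw [muExpPos, withDensity_apply _ measurableSet_Ioo, Measure.restrict_restrict measurableSet_Ioo,
    inter_eq_self_of_subset_left hsub]
  calc ENNReal.ofReal ((b - a) * exp (a ^ β))
      = ∫⁻ _ in Ioo a b, ENNReal.ofReal (exp (a ^ β)) := by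
        rw [setLIntegral_const, Real.volume_Ioo, mul_comm, ENNReal.ofReal_mul (exp_nonneg _)]
    _ ≤ ∫⁻ t in Ioo a b, ENNReal.ofReal (exp (t ^ β)) :=
        setLIntegral_mono (by fun_prop) fun t ht => ENNReal.ofReal_le_ofReal <|
          exp_le_exp.2 (rpow_le_rpow ha ht.1.le hβ)

lemma ofReal_exp_rpow_mul_inv_muExpPos_Ioo_le {β x r : ℝ} (hβ : 1 ≤ β) (hx : 0 < x) (hr : 0 < r) :
    ENNReal.ofReal (exp (x ^ β)) * (muExpPos β (Ioo (x - r) (x + r)))⁻¹ ≤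
      ENNReal.ofReal (2 / r * exp (-(β * (r / 2)) * x ^ (β - 1))) := by
  have hball : ENNReal.ofReal (r / 2 * exp ((x + r / 2) ^ β)) ≤ muExpPos β (Ioo (x - r) (x + r)) :=
    calc ENNReal.ofReal (r / 2 * exp ((x + r / 2) ^ β))
        = ENNReal.ofReal ((x + r - (x + r / 2)) * exp ((x + r / 2) ^ β)) := by
          congr 2; ring
      _ ≤ muExpPos β (Ioo (x + r / 2) (x + r)) :=
          ofReal_mul_exp_rpow_le_muExpPos_Ioo (by linarith) (by positivity)
      _ ≤ muExpPos β (Ioo (x - r) (x + r)) := measure_mono (Ioo_subset_Ioo (by linarith) le_rfl)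
  have hgrowth := mul_rpow_sub_one_le_add_rpow_sub_rpow hβ hx (c := r / 2) (by linarith)
  have hpos : 0 < r / 2 * exp ((x + r / 2) ^ β) := by positivity
  calc ENNReal.ofReal (exp (x ^ β)) * (muExpPos β (Ioo (x - r) (x + r)))⁻¹
      ≤ ENNReal.ofReal (exp (x ^ β)) * (ENNReal.ofReal (r / 2 * exp ((x + r / 2) ^ β)))⁻¹ :=
        mul_le_mul_right (ENNReal.inv_le_inv.2 hball) _
    _ = ENNReal.ofReal (2 / r * exp (x ^ β - (x + r / 2) ^ β)) := by
        rw [← div_eq_mul_inv, ← ENNReal.ofReal_div_of_pos hpos, exp_sub]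
        congr 1
        field_simp
    _ ≤ ENNReal.ofReal (2 / r * exp (-(β * (r / 2)) * x ^ (β - 1))) := by
        gcongr
        linarith

/-- for `β ∈ (1,∞)`, the measure `dμ = e^{x^β}dx` on `ℝ₊` has
infinite total mass and is integrable: `∫ 1/μ(B(x,r)) dμ(x) < ∞` for every
`r > 0`. -/
theorem muExpPos_infinite_and_integrable (β : ℝ) (hβ : 1 < β) :
    muExpPos β Set.univ = ⊤ ∧
    ∀ r : ℝ, 0 < r →
      (∫⁻ x, (muExpPos β (Set.Ioo (x - r) (x + r)))⁻¹ ∂(muExpPos β)) < ⊤ := by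
  refine ⟨muExpPos_univ β, fun r hr => ?_⟩
  have hdominant : IntegrableOn (fun x => 2 / r * exp (-(β * (r / 2)) * x ^ (β - 1))) (Ioi 0) :=
    (integrableOn_exp_neg_mul_rpow (by linarith) (by positivity)).const_mul _
  -- the integrand `x ↦ μ(B(x, r))⁻¹` is not known to be measurable
  rw [muExpPos, lintegral_withDensity_eq_lintegral_mul_non_measurable _ (by fun_prop)
    (ae_of_all _ fun _ => ENNReal.ofReal_lt_top)]
  refine lt_of_le_of_lt (setLIntegral_mono' measurableSet_Ioi fun x hx => ?_)
    hdominant.setLIntegral_lt_top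
  exact ofReal_exp_rpow_mul_inv_muExpPos_Ioo_le hβ.le hx hr
end

section
/- Let (X,τ) be a topological space and μ a Borel measure on X with μ(X) < ∞. Then the following are equivalent: (i) every open set U ⊆ X can be written as U = F ∪ Z where F is an F_σ set and Z is a μ-null set; (ii) for every Borel set B ⊆ X, μ(B) = sup{μ(C) : C closed, C ⊆ B}. -/
/-! Condition (ii) says that `μ` is inner regular for Borel sets with respect to closed sets.
For (i) ⇒ (ii), (i) makes `μ` inner regular for open sets with respect to `F_σ` sets, hence
(by continuity from below) with respect to closed sets; for a finite measure this passes from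
open sets to all Borel sets. For (ii) ⇒ (i), closed subsets `C n ⊆ U` with
`μ U < μ (C n) + n⁻¹` have an `F_σ` union of full measure in `U`. -/

open Set MeasureTheory
open scoped ENNReal

variable {X : Type*}

/-- An `F_σ` set: a countable union of closed sets. -/
def IsFSigma [TopologicalSpace X] (F : Set X) : Prop :=
  ∃ g : ℕ → Set X, (∀ n, IsClosed (g n)) ∧ F = ⋃ n, g n

theorem IsFSigma.measurableSet [TopologicalSpace X] [MeasurableSpace X] [OpensMeasurableSpace X]
    {F : Set X} (hF : IsFSigma F) : MeasurableSet F := by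
  obtain ⟨g, hg, rfl⟩ := hF
  exact .iUnion fun n => (hg n).measurableSet

namespace MeasureTheory.Measure

open Filter Topology

section InnerRegularWRT

variable {α : Type*} {m0 : MeasurableSpace α} {μ : Measure α} {p q : Set α → Prop}

theorem innerRegularWRT_iff_measure_eq_iSup :
    μ.InnerRegularWRT p q ↔ ∀ U, q U → μ U = ⨆ (K : Set α) (_ : p K ∧ K ⊆ U), μ K := by
  refine ⟨fun H U hU => le_antisymm (le_of_forall_lt fun r hr => ?_)
    (iSup₂_le fun K hK => measure_mono hK.2), fun h U hU r hr => ?_⟩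
  · obtain ⟨K, hKU, hK, hrK⟩ := H hU r hr
    exact lt_iSup_iff.2 ⟨K, lt_iSup_iff.2 ⟨⟨hK, hKU⟩, hrK⟩⟩
  · rw [h U hU] at hr
    simpa only [lt_iSup_iff, exists_prop, and_assoc, and_comm (a := p _)] using hr

theorem innerRegularWRT_trim_iff {m : MeasurableSpace α} (hm : m ≤ m0)
    (hp : ∀ s, p s → MeasurableSet[m] s) (hq : ∀ s, q s → MeasurableSet[m] s) :
    (μ.trim hm).InnerRegularWRT p q ↔ μ.InnerRegularWRT p q := by
  refine forall₂_congr fun U hU => ?_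
  rw [trim_measurableSet_eq hm (hq U hU)]
  refine forall₂_congr fun r _ => exists_congr fun K => and_congr_right fun _ =>
    and_congr_right fun hK => ?_
  rw [trim_measurableSet_eq hm (hp K hK)]

variable [TopologicalSpace α]

theorem innerRegularWRT_isClosed_isFSigma (μ : Measure α) :
    μ.InnerRegularWRT IsClosed IsFSigma := by
  rintro _ ⟨g, hg, rfl⟩ r hr
  rw [measure_iUnion_eq_iSup_accumulate] at hr
  obtain ⟨n, hn⟩ := lt_iSup_iff.mp hr
  refine ⟨accumulate g n, accumulate_subset_iUnion n, ?_, hn⟩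
  rw [accumulate_def]
  exact (finite_Iic n).isClosed_biUnion fun i _ => hg i

theorem InnerRegularWRT.isClosed_measurableSet_of_finite [BorelSpace α] [IsFiniteMeasure μ]
    (H : μ.InnerRegularWRT IsClosed IsOpen) : μ.InnerRegularWRT IsClosed MeasurableSet :=
  haveI := H.weaklyRegular_of_finite μ
  WeaklyRegular.innerRegular_measurable.mono (fun s hs => ⟨hs, measure_ne_top μ s⟩) fun _ h => h

/-- `m0` may be finer than `borel α`, so apply `isClosed_measurableSet_of_finite` to the trim of
`μ` to `borel α`, which agrees with `μ` on open and closed sets. -/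
theorem InnerRegularWRT.isClosed_borel_of_finite [OpensMeasurableSpace α] [IsFiniteMeasure μ]
    (H : μ.InnerRegularWRT IsClosed IsOpen) :
    μ.InnerRegularWRT IsClosed (MeasurableSet[borel α]) := by
  have hle : borel α ≤ m0 := OpensMeasurableSpace.borel_le
  have : @BorelSpace α _ (borel α) := @BorelSpace.mk α _ (borel α) _root_.rfl
  have hopen : ∀ s : Set α, IsOpen s → MeasurableSet[borel α] s := fun _ hs =>
    MeasurableSpace.measurableSet_generateFrom hs
  have hclosed : ∀ s : Set α, IsClosed s → MeasurableSet[borel α] s := fun _ hs =>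
    (hopen _ hs.isOpen_compl).of_compl
  rw [← innerRegularWRT_trim_iff hle hclosed fun _ => id]
  rw [← innerRegularWRT_trim_iff hle hclosed hopen] at H
  exact H.isClosed_measurableSet_of_finite

theorem InnerRegularWRT.exists_isFSigma_subset_measure_sdiff_eq_zero [OpensMeasurableSpace α]
    (H : μ.InnerRegularWRT IsClosed q) {U : Set α} (hU : q U) (hμU : μ U ≠ ∞) :
    ∃ F ⊆ U, IsFSigma F ∧ μ (U \ F) = 0 := by
  have hC (n : ℕ) : ∃ C ⊆ U, IsClosed C ∧ μ U < μ C + (n : ℝ≥0∞)⁻¹ :=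
    H.exists_subset_lt_add isClosed_empty hU hμU <|
      ENNReal.inv_ne_zero.2 (ENNReal.natCast_ne_top n)
  choose C hCU hC hμC using hC
  have hFU : ⋃ n, C n ⊆ U := iUnion_subset hCU
  have hF : IsFSigma (⋃ n, C n) := ⟨C, hC, _root_.rfl⟩
  have hμF : μ U ≤ μ (⋃ n, C n) := by
    have hlim : Tendsto (fun n : ℕ => μ (⋃ n, C n) + (n : ℝ≥0∞)⁻¹) atTop (𝓝 (μ (⋃ n, C n))) := by
      simpa using tendsto_const_nhds.add ENNReal.tendsto_inv_nat_nhds_zero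
    exact ge_of_tendsto' hlim fun n => (hμC n).le.trans (by gcongr; exact subset_iUnion C n)
  refine ⟨⋃ n, C n, hFU, hF, ?_⟩
  rw [measure_sdiff hFU hF.measurableSet.nullMeasurableSet (ne_top_of_le_ne_top hμU
    (measure_mono hFU))]
  exact tsub_eq_zero_of_le hμF

end InnerRegularWRT

end MeasureTheory.Measure

open MeasureTheory.Measure

/-- for a finite Borel measure `μ` on a topological space, the
following are equivalent: (i) every open set is the union of an `F_σ` set and
a `μ`-null set; (ii) every Borel set has measure equal to the supremum of the
measures of its closed subsets. -/
theorem open_eq_fsigma_union_null_iff_inner_regular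
    [TopologicalSpace X] [m : MeasurableSpace X]
    (hborel : ∀ s : Set X, IsOpen s → MeasurableSet s)
    (μ : Measure X) (hfin : μ Set.univ < ⊤) :
    (∀ U : Set X, IsOpen U →
        ∃ F Z : Set X, IsFSigma F ∧ MeasurableSet Z ∧ μ Z = 0 ∧ U = F ∪ Z) ↔
    (∀ B : Set X, MeasurableSet[borel X] B →
        μ B = ⨆ (C : Set X) (_ : IsClosed C ∧ C ⊆ B), μ C) := by
  have : OpensMeasurableSpace X := ⟨MeasurableSpace.generateFrom_le hborel⟩
  have : IsFiniteMeasure μ := ⟨hfin⟩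
  rw [← innerRegularWRT_iff_measure_eq_iSup]
  constructor
  · intro h
    have hFσ : μ.InnerRegularWRT IsFSigma IsOpen := by
      intro U hU r hr
      obtain ⟨F, Z, hF, -, hZ, rfl⟩ := h U hU
      rw [measure_congr (union_ae_eq_left_of_ae_eq_empty (ae_eq_empty.2 hZ))] at hr
      exact ⟨F, subset_union_left, hF, hr⟩
    exact ((innerRegularWRT_isClosed_isFSigma μ).trans hFσ).isClosed_borel_of_finite
  · intro H U hU
    obtain ⟨F, hFU, hF, hμ⟩ := H.exists_isFSigma_subset_measure_sdiff_eq_zero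
      (MeasurableSpace.measurableSet_generateFrom hU) (measure_ne_top μ U)
    exact ⟨F, U \ F, hF, hU.measurableSet.diff hF.measurableSet, hμ, (union_sdiff_cancel hFU).symm⟩
end

section
/- (Lusin-type theorem) Let (X,τ,μ) be a topological space with a nonnegative Borel regular measure μ such that μ(X) < ∞, and suppose every open set U ⊆ X can be written as U = F ∪ Z where F is F_σ and Z is μ-null. Then for any measurable function u: X → ℝ∪{±∞} which is finite a.e. and any ε > 0, there exists a closed set G_ε ⊆ X such that μ(X \ G_ε) < ε and the restriction of u to G_ε is continuous. -/
open Set MeasureTheory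
open scoped ENNReal

variable {X : Type*}

/-! Exhausting the `F_σ` part of an open set by finite unions of closed sets shows that `μ` is
inner regular by closed sets on open sets; as `μ` is finite, this extends to all Borel sets, and
Borel regularity applied to complements extends it to all measurable sets. Lusin's theorem then
follows as usual: for each set `t` of a countable basis of `EReal`, choose closed sets
`C ⊆ u⁻¹' t` and `D ⊆ (u⁻¹' t)ᶜ` covering all of `X` up to a small measure; on the intersection
`G` of all the `C ∪ D`, every `u⁻¹' t` is relatively open, being `G \ D`. -/

namespace MeasureTheory.Measure

section Regularity

variable [TopologicalSpace X] {m : MeasurableSpace X} {μ : Measure X}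

theorem innerRegularWRT_isClosed_isOpen_of_isOpen_eq_fSigma_union_null
    (h : ∀ U : Set X, IsOpen U → ∃ F Z : Set X, IsFSigma F ∧ μ Z = 0 ∧ U = F ∪ Z) :
    μ.InnerRegularWRT IsClosed IsOpen := by
  intro U hU r hr
  obtain ⟨F, Z, ⟨g, hg, rfl⟩, hZ, rfl⟩ := h U hU
  have hr : r < ⨆ n, μ (accumulate g n) := by
    rw [← measure_iUnion_eq_iSup_accumulate]
    exact hr.trans_le ((measure_union_le _ _).trans_eq (by rw [hZ, add_zero]))
  obtain ⟨n, hn⟩ := lt_iSup_iff.1 hr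
  refine ⟨accumulate g n, (accumulate_subset_iUnion n).trans subset_union_left, ?_, hn⟩
  rw [accumulate_def]
  exact (finite_Iic n).isClosed_biUnion fun i _ => hg i

theorem InnerRegularWRT.isClosed_borel [OpensMeasurableSpace X] [IsFiniteMeasure μ]
    (H : μ.InnerRegularWRT IsClosed IsOpen) :
    μ.InnerRegularWRT IsClosed (MeasurableSet[borel X]) := by
  -- `weaklyRegular_of_finite` needs a Borel space, so we work with the trace of `μ` on `borel X`.
  have hle : borel X ≤ m := OpensMeasurableSpace.borel_le
  have htrim : ∀ s, MeasurableSet[borel X] s → μ.trim hle s = μ s :=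
    fun s hs => trim_measurableSet_eq hle hs
  have hopen : ∀ {U : Set X}, IsOpen U → MeasurableSet[borel X] U :=
    fun hU => MeasurableSpace.measurableSet_generateFrom hU
  have hclosed : ∀ {K : Set X}, IsClosed K → MeasurableSet[borel X] K :=
    fun {K} hK => compl_compl K ▸ (hopen hK.isOpen_compl).compl
  have : @WeaklyRegular X (borel X) _ (μ.trim hle) := by
    refine @InnerRegularWRT.weaklyRegular_of_finite X (borel X) _
      (@BorelSpace.mk X _ (borel X) (Eq.refl _)) _ _ ?_
    intro U hU r hr
    rw [htrim U (hopen hU)] at hr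
    obtain ⟨K, hKU, hK, hrK⟩ := H hU r hr
    exact ⟨K, hKU, hK, (htrim K (hclosed hK)).symm ▸ hrK⟩
  intro B hB r hr
  rw [← htrim B hB] at hr
  obtain ⟨K, hKB, hK, hrK⟩ := @WeaklyRegular.innerRegular_measurable X (borel X) _ _ this B
    ⟨hB, @measure_ne_top X (borel X) _ _ B⟩ r hr
  exact ⟨K, hKB, hK, htrim K (hclosed hK) ▸ hrK⟩

theorem InnerRegularWRT.isClosed_measurableSet_of_forall_exists_borel_superset
    [OpensMeasurableSpace X] [IsFiniteMeasure μ]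
    (H : μ.InnerRegularWRT IsClosed (MeasurableSet[borel X]))
    (hreg : ∀ E, MeasurableSet E → ∃ B, MeasurableSet[borel X] B ∧ E ⊆ B ∧ μ B = μ E) :
    μ.InnerRegularWRT IsClosed MeasurableSet := by
  intro E hE r hr
  obtain ⟨B, hB, hEB, hμB⟩ := hreg Eᶜ hE.compl
  have hBm : MeasurableSet B := OpensMeasurableSpace.borel_le _ hB
  have hμE : μ Bᶜ = μ E := by
    rw [measure_compl hBm (measure_ne_top μ B), hμB, measure_compl hE (measure_ne_top μ _),
      ENNReal.sub_sub_cancel (measure_ne_top μ _) (measure_mono (subset_univ _))]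
  obtain ⟨K, hKB, hK, hrK⟩ := H hB.compl r (hμE ▸ hr)
  exact ⟨K, hKB.trans (compl_subset_comm.1 hEB), hK, hrK⟩

end Regularity

section ClosedApproximation

variable [TopologicalSpace X] [MeasurableSpace X] [OpensMeasurableSpace X] {μ : Measure X}
  [IsFiniteMeasure μ] (H : μ.InnerRegularWRT IsClosed MeasurableSet)
include H

theorem InnerRegularWRT.exists_isClosed_subset_measure_diff_lt {s : Set X} (hs : MeasurableSet s)
    {δ : ℝ≥0∞} (hδ : δ ≠ 0) : ∃ F ⊆ s, IsClosed F ∧ μ (s \ F) < δ := by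
  obtain ⟨F, hFs, hF, hμF⟩ := H.exists_subset_lt_add isClosed_empty hs (measure_ne_top μ s) hδ
  exact ⟨F, hFs, hF, measure_sdiff_lt_of_lt_add hF.nullMeasurableSet hFs (measure_ne_top μ F) hμF⟩

theorem InnerRegularWRT.exists_isClosed_measure_compl_lt_inter_eq_inter_isOpen {s : Set X}
    (hs : MeasurableSet s) {δ : ℝ≥0∞} (hδ : δ ≠ 0) :
    ∃ K, IsClosed K ∧ μ Kᶜ < δ ∧ ∃ U, IsOpen U ∧ K ∩ s = K ∩ U := by
  have hδ2 : δ / 2 ≠ 0 := (ENNReal.half_pos hδ).ne'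
  obtain ⟨C, hCs, hC, hμC⟩ := H.exists_isClosed_subset_measure_diff_lt hs hδ2
  obtain ⟨D, hDs, hD, hμD⟩ := H.exists_isClosed_subset_measure_diff_lt hs.compl hδ2
  refine ⟨C ∪ D, hC.union hD, ?_, Dᶜ, hD.isOpen_compl, ?_⟩
  · have hcover : (C ∪ D)ᶜ ⊆ (s \ C) ∪ (sᶜ \ D) := by
      intro x hx
      by_cases hxs : x ∈ s <;> simp_all
    calc μ (C ∪ D)ᶜ ≤ μ (s \ C) + μ (sᶜ \ D) := (measure_mono hcover).trans (measure_union_le _ _)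
      _ < δ / 2 + δ / 2 := ENNReal.add_lt_add hμC hμD
      _ = δ := ENNReal.add_halves δ
  · ext x
    have := @hCs x
    have := @hDs x
    by_cases hxs : x ∈ s <;> simp_all

end ClosedApproximation

end MeasureTheory.Measure

open TopologicalSpace Measure in
theorem Measurable.exists_isClosed_measure_compl_lt_continuousOn [TopologicalSpace X]
    [MeasurableSpace X] [OpensMeasurableSpace X] {μ : Measure X} [IsFiniteMeasure μ]
    (H : μ.InnerRegularWRT IsClosed MeasurableSet) {Y : Type*} [TopologicalSpace Y]
    [SecondCountableTopology Y] [MeasurableSpace Y] [OpensMeasurableSpace Y] {f : X → Y}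
    (hf : Measurable f) {ε : ℝ≥0∞} (hε : ε ≠ 0) :
    ∃ G, IsClosed G ∧ μ Gᶜ < ε ∧ ContinuousOn f G := by
  have : Countable (countableBasis Y) := (countable_countableBasis Y).to_subtype
  obtain ⟨δ, hδ, hδε⟩ := ENNReal.exists_pos_sum_of_countable' hε (countableBasis Y)
  choose K hK hKμ U hU hKU using fun t : countableBasis Y =>
    H.exists_isClosed_measure_compl_lt_inter_eq_inter_isOpen
      (hf (isOpen_of_mem_countableBasis t.2).measurableSet) (hδ t).ne'
  refine ⟨⋂ t, K t, isClosed_iInter hK, ?_, ?_⟩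
  · calc μ (⋂ t, K t)ᶜ ≤ ∑' t, μ (K t)ᶜ := by rw [compl_iInter]; exact measure_iUnion_le _
      _ ≤ ∑' t, δ t := ENNReal.tsum_le_tsum fun t => (hKμ t).le
      _ < ε := hδε
  · rw [continuousOn_iff_continuous_domRestrict, (isBasis_countableBasis Y).continuous_iff]
    intro t ht
    convert (hU ⟨t, ht⟩).preimage continuous_subtype_val using 1
    ext ⟨x, hx⟩
    have hxK : x ∈ K ⟨t, ht⟩ := mem_iInter.1 hx _
    show f x ∈ t ↔ x ∈ U ⟨t, ht⟩
    simpa only [mem_inter_iff, mem_preimage, hxK, true_and, eq_iff_iff] using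
      congrArg (x ∈ ·) (hKU ⟨t, ht⟩)

theorem lusin_type_general
    [TopologicalSpace X] [m : MeasurableSpace X]
    (hborel : ∀ s : Set X, IsOpen s → MeasurableSet s)
    (μ : Measure X) (hfin : μ Set.univ < ⊤)
    (hreg : ∀ E : Set X, MeasurableSet E →
      ∃ B : Set X, MeasurableSet[borel X] B ∧ E ⊆ B ∧ μ B = μ E)
    (hFσ : ∀ U : Set X, IsOpen U →
      ∃ F Z : Set X, IsFSigma F ∧ MeasurableSet Z ∧ μ Z = 0 ∧ U = F ∪ Z)
    (u : X → EReal) (hu : Measurable u)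
    (ε : ℝ≥0∞) (hε : 0 < ε) :
    ∃ G : Set X, IsClosed G ∧ μ Gᶜ < ε ∧ ContinuousOn u G := by
  have : OpensMeasurableSpace X := ⟨MeasurableSpace.generateFrom_le hborel⟩
  have : IsFiniteMeasure μ := ⟨hfin⟩
  have hopen : μ.InnerRegularWRT IsClosed IsOpen :=
    Measure.innerRegularWRT_isClosed_isOpen_of_isOpen_eq_fSigma_union_null fun U hU => by
      obtain ⟨F, Z, hF, -, hZ, rfl⟩ := hFσ U hU
      exact ⟨F, Z, hF, hZ, rfl⟩
  have hmeas : μ.InnerRegularWRT IsClosed MeasurableSet :=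
    hopen.isClosed_borel.isClosed_measurableSet_of_forall_exists_borel_superset hreg
  exact hu.exists_isClosed_measure_compl_lt_continuousOn hmeas hε.ne'

/-- Lusin-type theorem: let `μ` be a finite, Borel regular
measure on a topological space in which every open set is the union of an
`F_σ` set and a null set. Then for every measurable a.e.-finite function
`u : X → ℝ ∪ {±∞}` and every `ε > 0` there is a closed set `G` with
`μ(X \ G) < ε` and `u` restricted to `G` continuous. -/
theorem lusin_type
    [TopologicalSpace X] [m : MeasurableSpace X]
    (hborel : ∀ s : Set X, IsOpen s → MeasurableSet s)
    (μ : Measure X) (hfin : μ Set.univ < ⊤)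
    (hreg : ∀ E : Set X, MeasurableSet E →
      ∃ B : Set X, MeasurableSet[borel X] B ∧ E ⊆ B ∧ μ B = μ E)
    (hFσ : ∀ U : Set X, IsOpen U →
      ∃ F Z : Set X, IsFSigma F ∧ MeasurableSet Z ∧ μ Z = 0 ∧ U = F ∪ Z)
    (u : X → EReal) (hu : Measurable u)
    (hae : μ {x | u x = ⊤ ∨ u x = ⊥} = 0)
    (ε : ℝ≥0∞) (hε : 0 < ε) :
    ∃ G : Set X, IsClosed G ∧ μ Gᶜ < ε ∧ ContinuousOn u G :=
  lusin_type_general (m := m) hborel μ hfin hreg hFσ u hu ε hε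
end
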